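/- arXiv:2209.10814 — 8 statements merged into one kernel-verified Lean document; each statement's English description precedes it below -/
import Mathlib

section
/- Let Ω ⊆ ℝ² be a measurable set of finite Lebesgue measure m, let U : ℝ² → ℝ be measurable with 0 ≤ U ≤ 1 a.e. and U = 0 a.e. outside Ω, let H, G ∈ L²(ℝ²; ℂ), let a > 0, tr ∈ ℝ, and let I : ℝ² → ℝ be measurable with |I| ≤ B a.e. on Ω for some B ≥ 0. Then ∫_Ω | (Sig_a(|(H∗U)(x)|²) − I(x))² − (Sig_a(|(G∗U)(x)|²) − I(x))² | dx ≤ (a/2)·(1 + B)·m²·(‖H‖_{L²} + ‖G‖_{L²})·‖H − G‖_{L²}. In particular the data-misfit functional ‖Sig_a(|H∗U|²) − I‖²_{L²(Ω)} depends Lipschitz-continuously on the convolution kernel H. -/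
/-!
Since `0 ≤ U ≤ 1` vanishes off `Ω`, every translate-reflection `U (x - ·)` has `L²` norm at most
`m^{1/2}`, so Cauchy–Schwarz gives `|(K ∗ U)(x)| ≤ ‖K‖₂ m^{1/2}` for every `x` and every kernel
`K ∈ L²`; moreover `H ∗ U - G ∗ U = (H - G) ∗ U`. Writing `Sig_a(t) = σ(a (t - tr))` with the
logistic function `σ`, which takes values in `[0, 1]` and has slope at most `1/4`, the integrand at
`x ∈ Ω` factors as `|p - q| |p + q - 2 I(x)| ≤ (a/4) |‖u‖² - ‖v‖²| · 2 (1 + B)`, where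
`|‖u‖² - ‖v‖²| ≤ ‖u - v‖ (‖u‖ + ‖v‖) ≤ ‖H - G‖₂ (‖H‖₂ + ‖G‖₂) m`. Integrating this constant over
`Ω` contributes the second factor `m`.
-/

open MeasureTheory

/-- The sigmoid function `Sig_a(x) = 1/(1 + exp(-a(x - tr)))`. -/
noncomputable def Sig (a tr x : ℝ) : ℝ := 1 / (1 + Real.exp (-a * (x - tr)))

/-- Convolution `(H ∗ U)(x) = ∫ H(y) U(x − y) dy` of an `L²` kernel `H : ℝ² → ℂ`
with a real-valued mask `U`. -/
noncomputable def conv2 (H : EuclideanSpace ℝ (Fin 2) → ℂ)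
    (U : EuclideanSpace ℝ (Fin 2) → ℝ) (x : EuclideanSpace ℝ (Fin 2)) : ℂ :=
  ∫ y, H y * (U (x - y) : ℂ)

open Real ENNReal

lemma abs_sigmoid_sub_sigmoid_le (s t : ℝ) : |sigmoid s - sigmoid t| ≤ |s - t| / 4 := by
  have hderiv : ∀ x, ‖deriv sigmoid x‖ ≤ 1 / 4 := fun x ↦ by
    rw [deriv_sigmoid, norm_eq_abs, abs_le]
    constructor <;> nlinarith [sigmoid_nonneg x, sigmoid_le_one x, sq_nonneg (2 * sigmoid x - 1)]
  have := convex_univ.norm_image_sub_le_of_norm_deriv_le (fun x _ ↦ differentiableAt_sigmoid)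
    (fun x _ ↦ hderiv x) (Set.mem_univ t) (Set.mem_univ s)
  rw [norm_eq_abs, norm_eq_abs] at this
  linarith

lemma Sig_eq_sigmoid (a tr x : ℝ) : Sig a tr x = sigmoid (a * (x - tr)) := by
  rw [Sig, sigmoid_def, one_div, neg_mul]

lemma Sig_mem_Icc (a tr x : ℝ) : Sig a tr x ∈ Set.Icc 0 1 := by
  rw [Sig_eq_sigmoid]
  exact ⟨sigmoid_nonneg _, sigmoid_le_one _⟩

lemma abs_Sig_sub_Sig_le {a : ℝ} (ha : 0 ≤ a) (tr s t : ℝ) :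
    |Sig a tr s - Sig a tr t| ≤ a / 4 * |s - t| := by
  rw [Sig_eq_sigmoid, Sig_eq_sigmoid]
  calc _ ≤ |a * (s - tr) - a * (t - tr)| / 4 := abs_sigmoid_sub_sigmoid_le _ _
    _ = a / 4 * |s - t| := by
        rw [← mul_sub, sub_sub_sub_cancel_right, abs_mul, abs_of_nonneg ha]; ring

lemma abs_sub_sq_sub_sub_sq_le {p q c : ℝ} (hp : p ∈ Set.Icc (0:ℝ) 1) (hq : q ∈ Set.Icc (0:ℝ) 1) :
    |(p - c) ^ 2 - (q - c) ^ 2| ≤ 2 * (1 + |c|) * |p - q| := by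
  have hsum : |p + q - 2 * c| ≤ 2 * (1 + |c|) := by
    rw [abs_le]
    constructor <;> linarith [hp.1, hp.2, hq.1, hq.2, neg_abs_le c, le_abs_self c]
  calc |(p - c) ^ 2 - (q - c) ^ 2| = |p - q| * |p + q - 2 * c| := by rw [← abs_mul]; ring_nf
    _ ≤ 2 * (1 + |c|) * |p - q| := by rw [mul_comm]; gcongr

variable {α 𝕜 : Type*} [MeasurableSpace α] {μ : Measure α} [RCLike 𝕜]

lemma norm_integral_mul_le_eLpNorm_mul_eLpNorm {p q : ℝ≥0∞} [p.HolderTriple q 1] {f g : α → 𝕜}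
    (hf : MemLp f p μ) (hg : MemLp g q μ) :
    ‖∫ x, f x * g x ∂μ‖ ≤ (eLpNorm f p μ).toReal * (eLpNorm g q μ).toReal := by
  have hHolder : eLpNorm (fun x ↦ f x * g x) 1 μ ≤ eLpNorm f p μ * eLpNorm g q μ := by
    simpa using eLpNorm_le_eLpNorm_mul_eLpNorm'_of_norm hf.1 hg.1 (· * ·) 1
      (.of_forall fun x ↦ by simp [norm_mul])
  calc ‖∫ x, f x * g x ∂μ‖ ≤ (eLpNorm (fun x ↦ f x * g x) 1 μ).toReal := by
        simpa only [eLpNorm_one_eq_lintegral_enorm, ofReal_norm] using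
          norm_integral_le_lintegral_norm (μ := μ) (fun x ↦ f x * g x)
    _ ≤ _ := by
        rw [← toReal_mul]
        exact toReal_mono (mul_ne_top hf.eLpNorm_ne_top hg.eLpNorm_ne_top) hHolder

lemma eLpNorm_le_measure_rpow_of_norm_le_one {E : Type*} [NormedAddCommGroup E] {f : α → E}
    {s : Set α} (p : ℝ≥0∞) (hf : ∀ᵐ x ∂μ, ‖f x‖ ≤ 1) (hfs : ∀ᵐ x ∂μ, x ∉ s → f x = 0) :
    eLpNorm f p μ ≤ μ s ^ (1 / p.toReal) := by
  have hle : ∀ᵐ x ∂μ, ‖f x‖ ≤ ‖s.indicator (fun _ ↦ (1 : ℝ)) x‖ := by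
    filter_upwards [hf, hfs] with x hx hxs
    by_cases hxs' : x ∈ s
    · simpa [hxs'] using hx
    · simp [hxs', hxs hxs']
  calc eLpNorm f p μ ≤ eLpNorm (s.indicator fun _ ↦ (1 : ℝ)) p μ := eLpNorm_mono_ae hle
    _ ≤ ‖(1 : ℝ)‖ₑ * μ s ^ (1 / p.toReal) := eLpNorm_indicator_const_le _ _
    _ = μ s ^ (1 / p.toReal) := by simp

section Convolution

variable {Ω : Set (EuclideanSpace ℝ (Fin 2))} {U : EuclideanSpace ℝ (Fin 2) → ℝ}

lemma eLpNorm_comp_sub_left_le (hU : Measurable U) (hU1 : ∀ᵐ y, |U y| ≤ 1)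
    (hUΩ : ∀ᵐ y, y ∉ Ω → U y = 0) (x : EuclideanSpace ℝ (Fin 2)) :
    eLpNorm (fun y ↦ (U (x - y) : ℂ)) 2 volume ≤ volume Ω ^ (1 / 2 : ℝ) := by
  have hUc : AEStronglyMeasurable (fun z ↦ (U z : ℂ)) volume :=
    (Complex.measurable_ofReal.comp hU).aestronglyMeasurable
  have hshift := eLpNorm_comp_measurePreserving (p := 2) hUc
    (Measure.measurePreserving_sub_left volume x)
  rw [Function.comp_def] at hshift
  rw [hshift]
  simpa using eLpNorm_le_measure_rpow_of_norm_le_one 2 (by simpa using hU1)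
    (by simpa using hUΩ)

lemma memLp_comp_sub_left (hΩ : volume Ω < ⊤) (hU : Measurable U) (hU1 : ∀ᵐ y, |U y| ≤ 1)
    (hUΩ : ∀ᵐ y, y ∉ Ω → U y = 0) (x : EuclideanSpace ℝ (Fin 2)) :
    MemLp (fun y ↦ (U (x - y) : ℂ)) 2 volume :=
  ⟨(Complex.measurable_ofReal.comp (hU.comp (measurable_const.sub measurable_id)))
      |>.aestronglyMeasurable,
    (eLpNorm_comp_sub_left_le hU hU1 hUΩ x).trans_lt (rpow_lt_top_of_nonneg (by norm_num) hΩ.ne)⟩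

lemma conv2_sub (hΩ : volume Ω < ⊤) (hU : Measurable U) (hU1 : ∀ᵐ y, |U y| ≤ 1)
    (hUΩ : ∀ᵐ y, y ∉ Ω → U y = 0) {H G : EuclideanSpace ℝ (Fin 2) → ℂ}
    (hH : MemLp H 2 volume) (hG : MemLp G 2 volume) (x : EuclideanSpace ℝ (Fin 2)) :
    conv2 (H - G) U x = conv2 H U x - conv2 G U x := by
  have hV := memLp_comp_sub_left hΩ hU hU1 hUΩ x
  simp only [conv2, Pi.sub_apply, sub_mul]
  exact integral_sub (hH.integrable_mul hV) (hG.integrable_mul hV)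

lemma norm_conv2_le (hΩ : volume Ω < ⊤) (hU : Measurable U) (hU1 : ∀ᵐ y, |U y| ≤ 1)
    (hUΩ : ∀ᵐ y, y ∉ Ω → U y = 0) {H : EuclideanSpace ℝ (Fin 2) → ℂ}
    (hH : MemLp H 2 volume) (x : EuclideanSpace ℝ (Fin 2)) :
    ‖conv2 H U x‖ ≤ (eLpNorm H 2 volume).toReal * √(volume Ω).toReal := by
  refine (norm_integral_mul_le_eLpNorm_mul_eLpNorm hH
    (memLp_comp_sub_left hΩ hU hU1 hUΩ x)).trans ?_
  gcongr
  rw [sqrt_eq_rpow, ENNReal.toReal_rpow]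
  exact toReal_mono (rpow_ne_top_of_nonneg (by norm_num) hΩ.ne)
    (eLpNorm_comp_sub_left_le hU hU1 hUΩ x)

end Convolution

lemma abs_sq_Sig_sub_sq_Sig_le {E : Type*} [SeminormedAddCommGroup E] {a : ℝ} (ha : 0 ≤ a)
    (tr c : ℝ) (u v : E) :
    |(Sig a tr (‖u‖ ^ 2) - c) ^ 2 - (Sig a tr (‖v‖ ^ 2) - c) ^ 2| ≤
      2 * (1 + |c|) * (a / 4) * (‖u - v‖ * (‖u‖ + ‖v‖)) := by
  have hsq : |‖u‖ ^ 2 - ‖v‖ ^ 2| ≤ ‖u - v‖ * (‖u‖ + ‖v‖) := by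
    rw [sq_sub_sq, abs_mul, abs_of_nonneg (by positivity), mul_comm]
    gcongr
    exact abs_norm_sub_norm_le u v
  calc _ ≤ 2 * (1 + |c|) * |Sig a tr (‖u‖ ^ 2) - Sig a tr (‖v‖ ^ 2)| :=
        abs_sub_sq_sub_sub_sq_le (Sig_mem_Icc _ _ _) (Sig_mem_Icc _ _ _)
    _ ≤ 2 * (1 + |c|) * (a / 4 * (‖u - v‖ * (‖u‖ + ‖v‖))) := by
        gcongr
        exact (abs_Sig_sub_Sig_le ha tr _ _).trans (by gcongr)
    _ = _ := by ring

theorem misfit_lipschitz_in_kernel_general (Ω : Set (EuclideanSpace ℝ (Fin 2)))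
    (hΩfin : volume Ω < ⊤)
    (U : EuclideanSpace ℝ (Fin 2) → ℝ) (hUmeas : Measurable U)
    (hU01 : ∀ᵐ x, 0 ≤ U x ∧ U x ≤ 1)
    (hUsupp : ∀ᵐ x, x ∉ Ω → U x = 0)
    (H G : EuclideanSpace ℝ (Fin 2) → ℂ)
    (hH : MemLp H 2 volume) (hG : MemLp G 2 volume)
    (a tr : ℝ) (ha : 0 < a)
    (I : EuclideanSpace ℝ (Fin 2) → ℝ)
    (B : ℝ) (hIbd : ∀ᵐ x, x ∈ Ω → |I x| ≤ B) :
    ∫ x in Ω,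
        |(Sig a tr (‖conv2 H U x‖ ^ 2) - I x) ^ 2 -
          (Sig a tr (‖conv2 G U x‖ ^ 2) - I x) ^ 2| ≤
      (a / 2) * (1 + B) * (volume Ω).toReal ^ 2 *
        ((eLpNorm H 2 volume).toReal + (eLpNorm G 2 volume).toReal) *
          (eLpNorm (H - G) 2 volume).toReal := by
  have hU1 : ∀ᵐ y, |U y| ≤ 1 := hU01.mono fun y hy ↦ abs_le.2 ⟨by linarith [hy.1], hy.2⟩
  have hconv {K} (hK : MemLp K 2 volume) (x) := norm_conv2_le hΩfin hUmeas hU1 hUsupp hK x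
  set m := (volume Ω).toReal
  have hpointwise : ∀ᵐ x, x ∈ Ω →
      ‖|(Sig a tr (‖conv2 H U x‖ ^ 2) - I x) ^ 2 - (Sig a tr (‖conv2 G U x‖ ^ 2) - I x) ^ 2|‖ ≤
        2 * (1 + B) * (a / 4) * ((eLpNorm (H - G) 2 volume).toReal * √m *
          ((eLpNorm H 2 volume).toReal * √m + (eLpNorm G 2 volume).toReal * √m)) := by
    filter_upwards [hIbd] with x hIx hx
    rw [norm_eq_abs, abs_abs]
    refine (abs_sq_Sig_sub_sq_Sig_le ha.le tr (I x) _ _).trans ?_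
    rw [← conv2_sub hΩfin hUmeas hU1 hUsupp hH hG]
    refine mul_le_mul_of_nonneg (by gcongr; exact hIx hx) ?_ (by positivity) (by positivity)
    gcongr
    exacts [hconv (hH.sub hG) x, hconv hH x, hconv hG x]
  calc _ ≤ ‖∫ x in Ω, |(Sig a tr (‖conv2 H U x‖ ^ 2) - I x) ^ 2 -
          (Sig a tr (‖conv2 G U x‖ ^ 2) - I x) ^ 2|‖ := le_norm_self _
    _ ≤ _ := norm_setIntegral_le_of_norm_le_const_ae' hΩfin hpointwise
    _ = _ := by
      rw [measureReal_def]
      linear_combination (a / 2 * (1 + B) * (eLpNorm (H - G) 2 volume).toReal *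
        ((eLpNorm H 2 volume).toReal + (eLpNorm G 2 volume).toReal) * m) *
          mul_self_sqrt (toReal_nonneg : 0 ≤ m)

/-- Lipschitz dependence of the data-misfit `‖Sig_a(|H∗U|²) − I‖²_{L²(Ω)}`
on the convolution kernel `H`:
`∫_Ω |(Sig_a(|(H∗U)(x)|²) − I(x))² − (Sig_a(|(G∗U)(x)|²) − I(x))²| dx
  ≤ (a/2)(1 + B) m² (‖H‖_{L²} + ‖G‖_{L²}) ‖H − G‖_{L²}`. -/
theorem misfit_lipschitz_in_kernel (Ω : Set (EuclideanSpace ℝ (Fin 2)))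
    (hΩmeas : MeasurableSet Ω) (hΩfin : volume Ω < ⊤)
    (U : EuclideanSpace ℝ (Fin 2) → ℝ) (hUmeas : Measurable U)
    (hU01 : ∀ᵐ x, 0 ≤ U x ∧ U x ≤ 1)
    (hUsupp : ∀ᵐ x, x ∉ Ω → U x = 0)
    (H G : EuclideanSpace ℝ (Fin 2) → ℂ)
    (hH : MemLp H 2 volume) (hG : MemLp G 2 volume)
    (a tr : ℝ) (ha : 0 < a)
    (I : EuclideanSpace ℝ (Fin 2) → ℝ) (hImeas : Measurable I)
    (B : ℝ) (hB : 0 ≤ B) (hIbd : ∀ᵐ x, x ∈ Ω → |I x| ≤ B) :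
    ∫ x in Ω,
        |(Sig a tr (‖conv2 H U x‖ ^ 2) - I x) ^ 2 -
          (Sig a tr (‖conv2 G U x‖ ^ 2) - I x) ^ 2| ≤
      (a / 2) * (1 + B) * (volume Ω).toReal ^ 2 *
        ((eLpNorm H 2 volume).toReal + (eLpNorm G 2 volume).toReal) *
          (eLpNorm (H - G) 2 volume).toReal :=
  misfit_lipschitz_in_kernel_general Ω hΩfin U hUmeas hU01 hUsupp H G hH hG a tr ha I B hIbd
end

section
/- For ADMM iterates (U^k, V^k, P^k) as in the context, for every k ≥ 1 one has P^k = −∇h(V^k). Consequently, ‖P^{k+1} − P^k‖ = ‖∇h(V^{k+1}) − ∇h(V^k)‖ for all k ≥ 1. -/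
open scoped RealInnerProductSpace
open Filter

/-- Matrix–vector product `H U` as a map between Euclidean spaces. -/
noncomputable def mvec {M N : ℕ} (H : Matrix (Fin N) (Fin M) ℝ)
    (U : EuclideanSpace ℝ (Fin M)) : EuclideanSpace ℝ (Fin N) :=
  (WithLp.equiv 2 (Fin N → ℝ)).symm (H.mulVec (WithLp.equiv 2 (Fin M → ℝ) U))

/-- The augmented Lagrangian
`L(U,V,P) = f(U) + h(V) + ⟨P, V − HU⟩ + (ρ/2)‖V − HU‖²`. -/
noncomputable def lagr {M N : ℕ} (H : Matrix (Fin N) (Fin M) ℝ) (ρ : ℝ)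
    (f : EuclideanSpace ℝ (Fin M) → ℝ) (h : EuclideanSpace ℝ (Fin N) → ℝ)
    (U : EuclideanSpace ℝ (Fin M)) (V P : EuclideanSpace ℝ (Fin N)) : ℝ :=
  f U + h V + ⟪P, V - mvec H U⟫ + (ρ / 2) * ‖V - mvec H U‖ ^ 2

/-- The box constraint set `K = {U : 0 ≤ Uᵢ ≤ 1 for all i}`. -/
def Kbox (M : ℕ) : Set (EuclideanSpace ℝ (Fin M)) := {U | ∀ i, 0 ≤ U i ∧ U i ≤ 1}

/-! The `V`-update minimizes the differentiable function `V ↦ L(U^{k+1}, V, P^k)` over the whole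
space, so its gradient `∇h(V^{k+1}) + P^k + ρ (V^{k+1} − H U^{k+1})` vanishes there. The last two
terms are exactly the multiplier update, hence `P^{k+1} = −∇h(V^{k+1})`; the norm identity follows
by subtracting two consecutive instances. -/

section Gradient

open InnerProductSpace

variable {E : Type*} [NormedAddCommGroup E] [InnerProductSpace ℝ E] [CompleteSpace E]
  {f g : E → ℝ} {f' g' x : E}

theorem HasGradientAt.add (hf : HasGradientAt f f' x) (hg : HasGradientAt g g' x) :
    HasGradientAt (fun y => f y + g y) (f' + g') x := by
  rw [hasGradientAt_iff_hasFDerivAt, map_add]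
  exact hf.hasFDerivAt.add hg.hasFDerivAt

theorem HasGradientAt.const_add (hf : HasGradientAt f f' x) (a : ℝ) :
    HasGradientAt (fun y => a + f y) f' x := by
  simpa using (hasGradientAt_const x a).add hf

theorem HasGradientAt.const_mul (hf : HasGradientAt f f' x) (a : ℝ) :
    HasGradientAt (fun y => a * f y) (a • f') x := by
  rw [hasGradientAt_iff_hasFDerivAt, map_smul]
  exact hf.hasFDerivAt.const_mul a

theorem hasGradientAt_inner_sub (p c x : E) :
    HasGradientAt (fun y => ⟪p, y - c⟫) p x := by
  rw [hasGradientAt_iff_hasFDerivAt]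
  have : (fun y => ⟪p, y - c⟫) = fun y => toDual ℝ E p y - ⟪p, c⟫ := by
    funext y; simp [inner_sub_right]
  exact this ▸ (toDual ℝ E p).hasFDerivAt.sub_const _

theorem hasGradientAt_norm_sub_sq (c x : E) :
    HasGradientAt (fun y => ‖y - c‖ ^ 2) ((2 : ℝ) • (x - c)) x := by
  rw [hasGradientAt_iff_hasFDerivAt]
  refine ((hasFDerivAt_id x).sub_const c).norm_sq.congr_fderiv ?_
  ext y
  simp

theorem IsLocalMin.hasGradientAt_eq_zero (hmin : IsLocalMin f x) (hf : HasGradientAt f f' x) :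
    f' = 0 :=
  (toDual ℝ E).map_eq_zero_iff.mp (hmin.hasFDerivAt_eq_zero hf)

end Gradient

section Lagrangian

variable {M N : ℕ} {H : Matrix (Fin N) (Fin M) ℝ} {ρ : ℝ} {f : EuclideanSpace ℝ (Fin M) → ℝ}
  {h : EuclideanSpace ℝ (Fin N) → ℝ} {U : EuclideanSpace ℝ (Fin M)} {V P : EuclideanSpace ℝ (Fin N)}

theorem hasGradientAt_lagr_right (hh : DifferentiableAt ℝ h V) :
    HasGradientAt (fun V' => lagr H ρ f h U V' P)
      (gradient h V + P + ρ • (V - mvec H U)) V := by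
  have hpen : (ρ / 2) • (2 : ℝ) • (V - mvec H U) = ρ • (V - mvec H U) := by
    rw [smul_smul, div_mul_cancel₀ ρ two_ne_zero]
  exact hpen ▸ ((hh.hasGradientAt.const_add (f U)).add (hasGradientAt_inner_sub P _ V)).add
    ((hasGradientAt_norm_sub_sq _ V).const_mul (ρ / 2))

theorem add_smul_residual_eq_neg_gradient_of_forall_lagr_le (hh : DifferentiableAt ℝ h V)
    (hmin : ∀ V', lagr H ρ f h U V P ≤ lagr H ρ f h U V' P) :
    P + ρ • (V - mvec H U) = -gradient h V := by
  have hcrit := IsLocalMin.hasGradientAt_eq_zero (Eventually.of_forall hmin)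
    (hasGradientAt_lagr_right hh)
  rw [add_assoc] at hcrit
  exact eq_neg_of_add_eq_zero_right hcrit

end Lagrangian

theorem admm_multiplier_eq_neg_gradient_general
    {M N : ℕ} (H : Matrix (Fin N) (Fin M) ℝ) (ρ : ℝ)
    (f : EuclideanSpace ℝ (Fin M) → ℝ) (h : EuclideanSpace ℝ (Fin N) → ℝ)
    (hdiff : Differentiable ℝ h)
    (U : ℕ → EuclideanSpace ℝ (Fin M)) (V P : ℕ → EuclideanSpace ℝ (Fin N))
    (hVmin : ∀ k, ∀ V' : EuclideanSpace ℝ (Fin N),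
      lagr H ρ f h (U (k+1)) (V (k+1)) (P k) ≤ lagr H ρ f h (U (k+1)) V' (P k))
    (hPup : ∀ k, P (k+1) = P k + ρ • (V (k+1) - mvec H (U (k+1))))
    :
    (∀ k : ℕ, 1 ≤ k → P k = -gradient h (V k)) ∧
      (∀ k : ℕ, 1 ≤ k →
        ‖P (k+1) - P k‖ = ‖gradient h (V (k+1)) - gradient h (V k)‖) := by
  have hsucc (k : ℕ) : P (k + 1) = -gradient h (V (k + 1)) :=
    (hPup k).trans (add_smul_residual_eq_neg_gradient_of_forall_lagr_le (hdiff _) (hVmin k))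
  have hpos : ∀ k : ℕ, 1 ≤ k → P k = -gradient h (V k)
    | k + 1, _ => hsucc k
  refine ⟨hpos, fun k hk => ?_⟩
  rw [hsucc k, hpos k hk, neg_sub_neg, norm_sub_rev]

/-- For ADMM iterates, `P^k = −∇h(V^k)` for every `k ≥ 1`, and consequently
`‖P^{k+1} − P^k‖ = ‖∇h(V^{k+1}) − ∇h(V^k)‖` for all `k ≥ 1`. -/
theorem admm_multiplier_eq_neg_gradient
    {M N : ℕ} (H : Matrix (Fin N) (Fin M) ℝ) (ρ Lh : ℝ)
    (hρ : 0 < ρ) (hLh : 0 < Lh)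
    (f : EuclideanSpace ℝ (Fin M) → ℝ) (h : EuclideanSpace ℝ (Fin N) → ℝ)
    (hdiff : Differentiable ℝ h)
    (hlip : ∀ V W : EuclideanSpace ℝ (Fin N),
      ‖gradient h V - gradient h W‖ ≤ Lh * ‖V - W‖)
    (U : ℕ → EuclideanSpace ℝ (Fin M)) (V P : ℕ → EuclideanSpace ℝ (Fin N))
    (hUK : ∀ k, U k ∈ Kbox M)
    (hUmin : ∀ k, ∀ U' ∈ Kbox M,
      lagr H ρ f h (U (k+1)) (V k) (P k) ≤ lagr H ρ f h U' (V k) (P k))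
    (hVmin : ∀ k, ∀ V' : EuclideanSpace ℝ (Fin N),
      lagr H ρ f h (U (k+1)) (V (k+1)) (P k) ≤ lagr H ρ f h (U (k+1)) V' (P k))
    (hPup : ∀ k, P (k+1) = P k + ρ • (V (k+1) - mvec H (U (k+1))))
    :
    (∀ k : ℕ, 1 ≤ k → P k = -gradient h (V k)) ∧
      (∀ k : ℕ, 1 ≤ k →
        ‖P (k+1) - P k‖ = ‖gradient h (V (k+1)) - gradient h (V k)‖) :=
  admm_multiplier_eq_neg_gradient_general H ρ f h hdiff U V P hVmin hPup
end

section
/- (Sufficient decrease, Lemma 3.1.) Assume ρ/2 − L_h/ρ − L_h > 0. Then for ADMM iterates (U^k, V^k, P^k) as in the context and every k ≥ 1, L(U^k, V^k, P^k) − L(U^{k+1}, V^{k+1}, P^{k+1}) ≥ (ρ/2 − L_h/ρ − L_h) · ‖V^{k+1} − V^k‖². -/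
open scoped RealInnerProductSpace
open Filter

/-
Split the decrease along the three ADMM updates. The `U`-step does not increase `L` since
`U^{k+1}` minimises it over `K`. The optimality condition of the `V`-step reads
`∇h(V^{k+1}) = -P^{k+1}`, so `L(U^{k+1}, ·, P^k)` is `h` plus a quadratic with curvature `ρ`
that is stationary at `V^{k+1}`, and the descent lemma gives a decrease of
`(ρ - L_h)/2 ‖V^{k+1} - V^k‖²`. The `P`-step raises `L` by `‖P^{k+1} - P^k‖²/ρ`, and
`‖P^{k+1} - P^k‖ = ‖∇h(V^{k+1}) - ∇h(V^k)‖ ≤ L_h ‖V^{k+1} - V^k‖`.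
-/

section LipschitzGradient

variable {F : Type*} [NormedAddCommGroup F] [InnerProductSpace ℝ F] [CompleteSpace F]

theorem IsLocalMin.hasGradientAt_eq_zero_s6 {φ : F → ℝ} {x g : F} (hmin : IsLocalMin φ x)
    (hφ : HasGradientAt φ g x) : g = 0 :=
  (InnerProductSpace.toDual ℝ F).map_eq_zero_iff.mp (hmin.hasFDerivAt_eq_zero hφ)

/-- The lower half of the descent lemma. -/
theorem linear_approx_sub_le_of_lipschitz_gradient {h : F → ℝ} (hdiff : Differentiable ℝ h)
    {L : ℝ} (hlip : ∀ x y, ‖gradient h x - gradient h y‖ ≤ L * ‖x - y‖) (x y : F) :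
    h x + ⟪gradient h x, y - x⟫ - L / 2 * ‖y - x‖ ^ 2 ≤ h y := by
  set d := y - x
  -- `g` is monotone on `[0, ∞)` because `L`-Lipschitzness of `∇h` bounds its only negative term.
  let g : ℝ → ℝ := fun t => h (x + t • d) - t * ⟪gradient h x, d⟫ + L / 2 * t ^ 2 * ‖d‖ ^ 2
  have hg : ∀ t, HasDerivAt g
      (⟪gradient h (x + t • d), d⟫ - ⟪gradient h x, d⟫ + L * t * ‖d‖ ^ 2) t := by
    intro t
    have hline : HasDerivAt (fun s : ℝ => x + s • d) d t := by
      simpa using ((hasDerivAt_id t).smul_const d).const_add x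
    have hcomp := (hdiff (x + t • d)).hasGradientAt.hasFDerivAt.comp_hasDerivAt t hline
    rw [InnerProductSpace.toDual_apply_apply] at hcomp
    refine ((hcomp.sub (hasDerivAt_mul_const ⟪gradient h x, d⟫)).add
      (((hasDerivAt_pow 2 t).const_mul (L / 2)).mul_const (‖d‖ ^ 2))).congr_deriv ?_
    ring
  have hmono : MonotoneOn g (Set.Ici 0) := by
    refine monotoneOn_of_hasDerivWithinAt_nonneg (convex_Ici 0)
      (fun t _ => (hg t).continuousAt.continuousWithinAt) (fun t _ => (hg t).hasDerivWithinAt) ?_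
    intro t ht
    rw [interior_Ici, Set.mem_Ioi] at ht
    have hgrad : ‖gradient h (x + t • d) - gradient h x‖ ≤ L * (t * ‖d‖) := by
      simpa [norm_smul, abs_of_pos ht] using hlip (x + t • d) x
    have hinner := real_inner_le_norm (gradient h x - gradient h (x + t • d)) d
    rw [norm_sub_rev, inner_sub_left] at hinner
    nlinarith [norm_nonneg d]
  have h01 := hmono Set.self_mem_Ici (Set.mem_Ici.mpr zero_le_one) zero_le_one
  simp only [g, zero_smul, add_zero, one_smul, d, add_sub_cancel] at h01
  linarith

end LipschitzGradient

section AugmentedLagrangian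

variable {M N : ℕ} (H : Matrix (Fin N) (Fin M) ℝ) (ρ : ℝ)
  (f : EuclideanSpace ℝ (Fin M) → ℝ) (h : EuclideanSpace ℝ (Fin N) → ℝ)

theorem hasGradientAt_lagr_snd {U : EuclideanSpace ℝ (Fin M)} {V P : EuclideanSpace ℝ (Fin N)}
    (hV : DifferentiableAt ℝ h V) :
    HasGradientAt (fun W => lagr H ρ f h U W P) (gradient h V + P + ρ • (V - mvec H U)) V := by
  have hres := (hasFDerivAt_id (𝕜 := ℝ) V).sub_const (mvec H U)
  have hsum := (((hasFDerivAt_const (f U) V).add hV.hasGradientAt.hasFDerivAt).add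
    ((innerSL ℝ P : EuclideanSpace ℝ (Fin N) →L[ℝ] ℝ).hasFDerivAt.comp V hres)).add
    (hres.norm_sq.const_mul (ρ / 2))
  refine hsum.congr_fderiv ?_
  ext W
  simp only [toDual_gradient, zero_add, ContinuousLinearMap.comp_id, id_eq, map_sub, add_apply,
    coe_innerSL_apply, smul_apply, sub_apply, real_inner_comm, nsmul_eq_mul, Nat.cast_ofNat,
    smul_eq_mul, map_add, map_smul, InnerProductSpace.toDual_apply_apply, add_right_inj]
  ring

theorem gradient_add_eq_zero_of_lagr_min {U : EuclideanSpace ℝ (Fin M)}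
    {V P : EuclideanSpace ℝ (Fin N)} (hV : DifferentiableAt ℝ h V)
    (hmin : ∀ W, lagr H ρ f h U V P ≤ lagr H ρ f h U W P) :
    gradient h V + P + ρ • (V - mvec H U) = 0 :=
  IsLocalMin.hasGradientAt_eq_zero_s6 (φ := fun W => lagr H ρ f h U W P)
    (Filter.Eventually.of_forall hmin)
    (hasGradientAt_lagr_snd H ρ f h hV)

theorem lagr_sub_lagr_snd (U : EuclideanSpace ℝ (Fin M)) (V W P : EuclideanSpace ℝ (Fin N)) :
    lagr H ρ f h U W P - lagr H ρ f h U V P =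
      h W - h V + ⟪P + ρ • (V - mvec H U), W - V⟫ + ρ / 2 * ‖W - V‖ ^ 2 := by
  have hsq := norm_add_sq_real (W - V) (V - mvec H U)
  rw [sub_add_sub_cancel] at hsq
  have hlin : ⟪P, W - mvec H U⟫ - ⟪P, V - mvec H U⟫ = ⟪P, W - V⟫ := by
    rw [← inner_sub_right, sub_sub_sub_cancel_right]
  simp only [lagr, inner_add_left, real_inner_smul_left]
  linear_combination ρ / 2 * hsq + hlin - ρ * real_inner_comm (W - V) (V - mvec H U)

theorem lagr_sub_lagr_snd_ge_of_gradient {L : ℝ} (hdiff : Differentiable ℝ h)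
    (hlip : ∀ x y, ‖gradient h x - gradient h y‖ ≤ L * ‖x - y‖)
    {U : EuclideanSpace ℝ (Fin M)} {V P : EuclideanSpace ℝ (Fin N)}
    (hV : gradient h V + P + ρ • (V - mvec H U) = 0) (W : EuclideanSpace ℝ (Fin N)) :
    (ρ - L) / 2 * ‖W - V‖ ^ 2 ≤ lagr H ρ f h U W P - lagr H ρ f h U V P := by
  have hmult : P + ρ • (V - mvec H U) = -gradient h V := by
    rw [add_assoc] at hV
    exact (neg_eq_of_add_eq_zero_right hV).symm
  rw [lagr_sub_lagr_snd, hmult, inner_neg_left]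
  linarith [linear_approx_sub_le_of_lipschitz_gradient hdiff hlip V W]

theorem lagr_sub_lagr_of_multiplier_update {U : EuclideanSpace ℝ (Fin M)}
    {V P P' : EuclideanSpace ℝ (Fin N)} (hP' : P' = P + ρ • (V - mvec H U)) :
    lagr H ρ f h U V P - lagr H ρ f h U V P' = -(‖P' - P‖ ^ 2 / ρ) := by
  subst hP'
  simp only [lagr, inner_add_left, real_inner_smul_left, real_inner_self_eq_norm_sq,
    add_sub_cancel_left, norm_smul, Real.norm_eq_abs, mul_pow, sq_abs]
  field_simp
  ring

end AugmentedLagrangian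

theorem sufficient_decrease_coeff_le {ρ L : ℝ} (hρ : 0 < ρ) (hL : 0 ≤ L)
    (hcond : 0 < ρ / 2 - L / ρ - L) :
    ρ / 2 - L / ρ - L ≤ (ρ - L) / 2 - L ^ 2 / ρ := by
  have hLρ : 0 ≤ L / ρ := div_nonneg hL hρ.le
  have hhalf : L / ρ ≤ 1 / 2 := by
    rw [div_le_iff₀ hρ]
    linarith
  have hsq : L ^ 2 / ρ ≤ L / 2 := by
    calc L ^ 2 / ρ = L * (L / ρ) := by ring
      _ ≤ L * (1 / 2) := mul_le_mul_of_nonneg_left hhalf hL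
      _ = L / 2 := by ring
  linarith

/-- Sufficient decrease (Lemma 3.1): if `ρ/2 − L_h/ρ − L_h > 0`, then for every `k ≥ 1`,
`L(U^k,V^k,P^k) − L(U^{k+1},V^{k+1},P^{k+1}) ≥ (ρ/2 − L_h/ρ − L_h)‖V^{k+1} − V^k‖²`. -/
theorem admm_sufficient_decrease
    {M N : ℕ} (H : Matrix (Fin N) (Fin M) ℝ) (ρ Lh : ℝ)
    (hρ : 0 < ρ) (hLh : 0 < Lh)
    (f : EuclideanSpace ℝ (Fin M) → ℝ) (h : EuclideanSpace ℝ (Fin N) → ℝ)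
    (hdiff : Differentiable ℝ h)
    (hlip : ∀ V W : EuclideanSpace ℝ (Fin N),
      ‖gradient h V - gradient h W‖ ≤ Lh * ‖V - W‖)
    (U : ℕ → EuclideanSpace ℝ (Fin M)) (V P : ℕ → EuclideanSpace ℝ (Fin N))
    (hUK : ∀ k, U k ∈ Kbox M)
    (hUmin : ∀ k, ∀ U' ∈ Kbox M,
      lagr H ρ f h (U (k+1)) (V k) (P k) ≤ lagr H ρ f h U' (V k) (P k))
    (hVmin : ∀ k, ∀ V' : EuclideanSpace ℝ (Fin N),
      lagr H ρ f h (U (k+1)) (V (k+1)) (P k) ≤ lagr H ρ f h (U (k+1)) V' (P k))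
    (hPup : ∀ k, P (k+1) = P k + ρ • (V (k+1) - mvec H (U (k+1))))
    (hcond : 0 < ρ / 2 - Lh / ρ - Lh)
    :
    ∀ k : ℕ, 1 ≤ k →
      lagr H ρ f h (U k) (V k) (P k) - lagr H ρ f h (U (k+1)) (V (k+1)) (P (k+1)) ≥
        (ρ / 2 - Lh / ρ - Lh) * ‖V (k+1) - V k‖ ^ 2 := by
  intro k hk
  obtain ⟨j, rfl⟩ := Nat.exists_eq_add_of_le' hk
  have hopt (m : ℕ) : gradient h (V (m+1)) + P m + ρ • (V (m+1) - mvec H (U (m+1))) = 0 :=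
    gradient_add_eq_zero_of_lagr_min H ρ f h (hdiff _) (hVmin m)
  -- this is why `k ≥ 1`: only from the first update on is the multiplier tied to `∇h`
  have hgrad (m : ℕ) : gradient h (V (m+1)) = -P (m+1) := by
    rw [hPup, eq_neg_iff_add_eq_zero, ← add_assoc]
    exact hopt m
  have hPdiff : ‖P (j+1+1) - P (j+1)‖ ≤ Lh * ‖V (j+1+1) - V (j+1)‖ := by
    have := hlip (V (j+1)) (V (j+1+1))
    rwa [hgrad, hgrad, neg_sub_neg, norm_sub_rev (V _)] at this
  have hUstep := hUmin (j+1) (U (j+1)) (hUK (j+1))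
  have hVstep := lagr_sub_lagr_snd_ge_of_gradient H ρ f h hdiff hlip (hopt (j+1)) (V (j+1))
  have hPstep := lagr_sub_lagr_of_multiplier_update H ρ f h (hPup (j+1))
  have hPsq : ‖P (j+1+1) - P (j+1)‖ ^ 2 / ρ ≤ Lh ^ 2 / ρ * ‖V (j+1+1) - V (j+1)‖ ^ 2 := by
    rw [div_mul_eq_mul_div, ← mul_pow]
    exact div_le_div_of_nonneg_right (pow_le_pow_left₀ (norm_nonneg _) hPdiff 2) hρ.le
  have hcoef := mul_le_mul_of_nonneg_right (sufficient_decrease_coeff_le hρ hLh.le hcond)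
    (sq_nonneg ‖V (j+1+1) - V (j+1)‖)
  rw [norm_sub_rev] at hVstep
  linarith
end

section
/- (Lower bound of the Lagrangian, part of Lemma 3.2.) Assume ρ/2 − L_h/ρ − L_h > 0, f(U) ≥ 0 for all U ∈ ℝ^M, and h(V) ≥ 0 for all V ∈ ℝ^N. Then for ADMM iterates (U^k, V^k, P^k) as in the context and every k ≥ 1, L(U^k, V^k, P^k) ≥ (L_h/ρ) · ‖V^k − H U^k‖² ≥ 0. -/
/-!
At an iterate with `k ≥ 1`, the optimality of the `V`-step and the multiplier update give
`P^k = -∇h(V^k)`, so `L(U^k, V^k, P^k) = f(U^k) + h(V^k) + ⟪∇h(V^k), HU^k - V^k⟫ + (ρ/2)‖V^k - HU^k‖²`.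
The descent inequality for the `L_h`-smooth `h`, taken between `V^k` and `HU^k`, bounds the middle
terms below by `h(HU^k) - L_h‖V^k - HU^k‖²`, hence `L ≥ (ρ/2 - L_h)‖V^k - HU^k‖²`,
which dominates `(L_h/ρ)‖V^k - HU^k‖²` under the step-size condition.
-/

open scoped RealInnerProductSpace
open Filter

open InnerProductSpace

section GradientLemmas

variable {E : Type*} [NormedAddCommGroup E] [InnerProductSpace ℝ E] [CompleteSpace E]

theorem le_add_inner_gradient_add_mul_norm_sub_sq {h : E → ℝ} {Lh : ℝ} (hLh : 0 ≤ Lh)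
    (hdiff : Differentiable ℝ h)
    (hlip : ∀ V W : E, ‖gradient h V - gradient h W‖ ≤ Lh * ‖V - W‖) (x y : E) :
    h y ≤ h x + ⟪gradient h x, y - x⟫ + Lh * ‖y - x‖ ^ 2 := by
  set g := gradient h x
  have hderiv : ∀ z, HasFDerivAt (fun z => h z - ⟪g, z⟫) (toDual ℝ E (gradient h z - g)) z :=
    fun z => ((hdiff z).hasGradientAt.hasFDerivAt.sub (innerSL ℝ g).hasFDerivAt).congr_fderiv
      (by rw [map_sub]; rfl)
  have hbound : ∀ z ∈ segment ℝ x y, ‖toDual ℝ E (gradient h z - g)‖ ≤ Lh * ‖y - x‖ := by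
    intro z hz
    rw [LinearIsometryEquiv.norm_map]
    exact (hlip z x).trans (by gcongr; exact norm_sub_le_of_mem_segment hz)
  have hmvt := (convex_segment x y).norm_image_sub_le_of_norm_hasFDerivWithin_le
    (fun z _ => (hderiv z).hasFDerivWithinAt) hbound (left_mem_segment ℝ x y)
    (right_mem_segment ℝ x y)
  have := (Real.le_norm_self _).trans hmvt
  rw [inner_sub_right]
  linarith

theorem IsLocalMin.add_smul_sub_eq_neg_gradient {h : E → ℝ} {ρ : ℝ} {P A V : E}
    (hdiff : DifferentiableAt ℝ h V)
    (hmin : IsLocalMin (fun W => h W + ⟪P, W - A⟫ + ρ / 2 * ‖W - A‖ ^ 2) V) :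
    P + ρ • (V - A) = -gradient h V := by
  have hderiv := ((hdiff.hasGradientAt.hasFDerivAt.add
    ((innerSL ℝ P).hasFDerivAt.comp V ((hasFDerivAt_id V).sub_const A))).add
    (((hasFDerivAt_id V).sub_const A).norm_sq.const_mul (ρ / 2)))
  set d := gradient h V + (P + ρ • (V - A))
  have hzero := DFunLike.congr_fun (hmin.hasFDerivAt_eq_zero hderiv) d
  simp only [add_apply, ContinuousLinearMap.comp_apply, toDual_apply_apply, smul_apply,
    innerSL_apply_apply, ContinuousLinearMap.id_apply, zero_apply, id_eq, smul_eq_mul,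
    nsmul_eq_mul] at hzero
  rw [eq_neg_iff_add_eq_zero, add_comm, ← inner_self_eq_zero (𝕜 := ℝ), inner_add_left,
    inner_add_left, real_inner_smul_left]
  linarith

end GradientLemmas

theorem lagr_ge_of_eq_neg_gradient {M N : ℕ} (H : Matrix (Fin N) (Fin M) ℝ) (ρ : ℝ) {Lh : ℝ}
    (hLh : 0 ≤ Lh) (f : EuclideanSpace ℝ (Fin M) → ℝ) {h : EuclideanSpace ℝ (Fin N) → ℝ}
    (hdiff : Differentiable ℝ h)
    (hlip : ∀ V W : EuclideanSpace ℝ (Fin N),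
      ‖gradient h V - gradient h W‖ ≤ Lh * ‖V - W‖)
    (U : EuclideanSpace ℝ (Fin M)) {V P : EuclideanSpace ℝ (Fin N)} (hP : P = -gradient h V) :
    f U + h (mvec H U) + (ρ / 2 - Lh) * ‖V - mvec H U‖ ^ 2 ≤ lagr H ρ f h U V P := by
  have hdescent := le_add_inner_gradient_add_mul_norm_sub_sq hLh hdiff hlip V (mvec H U)
  rw [← neg_sub, inner_neg_right, norm_neg] at hdescent
  rw [lagr, hP, inner_neg_left]
  linarith

theorem admm_lagrangian_lower_bound_general
    {M N : ℕ} (H : Matrix (Fin N) (Fin M) ℝ) (ρ Lh : ℝ)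
    (hρ : 0 < ρ) (hLh : 0 < Lh)
    (f : EuclideanSpace ℝ (Fin M) → ℝ) (h : EuclideanSpace ℝ (Fin N) → ℝ)
    (hdiff : Differentiable ℝ h)
    (hlip : ∀ V W : EuclideanSpace ℝ (Fin N),
      ‖gradient h V - gradient h W‖ ≤ Lh * ‖V - W‖)
    (U : ℕ → EuclideanSpace ℝ (Fin M)) (V P : ℕ → EuclideanSpace ℝ (Fin N))
    (hVmin : ∀ k, ∀ V' : EuclideanSpace ℝ (Fin N),
      lagr H ρ f h (U (k+1)) (V (k+1)) (P k) ≤ lagr H ρ f h (U (k+1)) V' (P k))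
    (hPup : ∀ k, P (k+1) = P k + ρ • (V (k+1) - mvec H (U (k+1))))
    (hcond : 0 < ρ / 2 - Lh / ρ - Lh)
    (hf : ∀ U' : EuclideanSpace ℝ (Fin M), 0 ≤ f U')
    (hh : ∀ V' : EuclideanSpace ℝ (Fin N), 0 ≤ h V')
    :
    ∀ k : ℕ, 1 ≤ k →
      lagr H ρ f h (U k) (V k) (P k) ≥ (Lh / ρ) * ‖V k - mvec H (U k)‖ ^ 2 ∧
        (Lh / ρ) * ‖V k - mvec H (U k)‖ ^ 2 ≥ 0 := by
  intro k hk
  obtain ⟨m, rfl⟩ : ∃ m, k = m + 1 := ⟨k - 1, by omega⟩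
  have hmultiplier : P (m + 1) = -gradient h (V (m + 1)) := by
    rw [hPup m]
    refine IsLocalMin.add_smul_sub_eq_neg_gradient (hdiff _) (Eventually.of_forall fun W => ?_)
    have := hVmin m W
    simp only [lagr] at this
    linarith
  have hlower := lagr_ge_of_eq_neg_gradient H ρ hLh.le f hdiff hlip (U (m + 1)) hmultiplier
  have hgap := mul_nonneg hcond.le (sq_nonneg ‖V (m + 1) - mvec H (U (m + 1))‖)
  have hnonneg : 0 ≤ Lh / ρ * ‖V (m + 1) - mvec H (U (m + 1))‖ ^ 2 := by positivity
  exact ⟨by linarith [hf (U (m + 1)), hh (mvec H (U (m + 1)))], hnonneg⟩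

/-- Lower bound of the Lagrangian (part of Lemma 3.2): if `ρ/2 − L_h/ρ − L_h > 0`,
`f ≥ 0` and `h ≥ 0`, then for every `k ≥ 1`,
`L(U^k,V^k,P^k) ≥ (L_h/ρ)‖V^k − HU^k‖² ≥ 0`. -/
theorem admm_lagrangian_lower_bound
    {M N : ℕ} (H : Matrix (Fin N) (Fin M) ℝ) (ρ Lh : ℝ)
    (hρ : 0 < ρ) (hLh : 0 < Lh)
    (f : EuclideanSpace ℝ (Fin M) → ℝ) (h : EuclideanSpace ℝ (Fin N) → ℝ)
    (hdiff : Differentiable ℝ h)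
    (hlip : ∀ V W : EuclideanSpace ℝ (Fin N),
      ‖gradient h V - gradient h W‖ ≤ Lh * ‖V - W‖)
    (U : ℕ → EuclideanSpace ℝ (Fin M)) (V P : ℕ → EuclideanSpace ℝ (Fin N))
    (hUK : ∀ k, U k ∈ Kbox M)
    (hUmin : ∀ k, ∀ U' ∈ Kbox M,
      lagr H ρ f h (U (k+1)) (V k) (P k) ≤ lagr H ρ f h U' (V k) (P k))
    (hVmin : ∀ k, ∀ V' : EuclideanSpace ℝ (Fin N),
      lagr H ρ f h (U (k+1)) (V (k+1)) (P k) ≤ lagr H ρ f h (U (k+1)) V' (P k))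
    (hPup : ∀ k, P (k+1) = P k + ρ • (V (k+1) - mvec H (U (k+1))))
    (hcond : 0 < ρ / 2 - Lh / ρ - Lh)
    (hf : ∀ U' : EuclideanSpace ℝ (Fin M), 0 ≤ f U')
    (hh : ∀ V' : EuclideanSpace ℝ (Fin N), 0 ≤ h V')
    :
    ∀ k : ℕ, 1 ≤ k →
      lagr H ρ f h (U k) (V k) (P k) ≥ (Lh / ρ) * ‖V k - mvec H (U k)‖ ^ 2 ∧
        (Lh / ρ) * ‖V k - mvec H (U k)‖ ^ 2 ≥ 0 :=
  admm_lagrangian_lower_bound_general H ρ Lh hρ hLh f h hdiff hlip U V P hVmin hPup hcond hf hh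
end

section
/- (Boundedness of iterates, part of Lemma 3.2.) Assume ρ/2 − L_h/ρ − L_h > 0, f(U) ≥ 0 for all U ∈ ℝ^M, and h(V) ≥ 0 for all V ∈ ℝ^N. Then for ADMM iterates (U^k, V^k, P^k) as in the context, the sequence (U^k, V^k, P^k) is bounded: there exists R > 0 such that ‖U^k‖ ≤ R, ‖V^k‖ ≤ R and ‖P^k‖ ≤ R for all k ≥ 1. -/
open scoped RealInnerProductSpace
open Filter

section aux

variable {E : Type*} [NormedAddCommGroup E] [InnerProductSpace ℝ E] [CompleteSpace E]

lemma admm_aux_hasFDeriv_phi (h : E → ℝ) (hdiff : Differentiable ℝ h) (P c : E) (ρ f0 : ℝ)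
    (x : E) :
    HasFDerivAt (fun V => f0 + h V + ⟪P, V - c⟫ + ρ / 2 * ‖V - c‖ ^ 2)
      (InnerProductSpace.toDual ℝ E (gradient h x + P + ρ • (x - c))) x := by
  have h1 : HasFDerivAt h (InnerProductSpace.toDual ℝ E (gradient h x)) x := by
    have := (hdiff x).hasFDerivAt
    rwa [show InnerProductSpace.toDual ℝ E (gradient h x) = fderiv ℝ h x from
      (InnerProductSpace.toDual ℝ E).apply_symm_apply _]
  have hid : HasFDerivAt (fun V : E => V - c) (ContinuousLinearMap.id ℝ E) x :=
    (hasFDerivAt_id x).sub_const c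
  have h2 : HasFDerivAt (fun V : E => ⟪P, V - c⟫)
      ((fderivInnerCLM ℝ (P, x - c)).comp
        (((0 : E →L[ℝ] E)).prod (ContinuousLinearMap.id ℝ E))) x :=
    (hasFDerivAt_const P x).inner ℝ hid
  have h3 : HasFDerivAt (fun V : E => ⟪V - c, V - c⟫)
      ((fderivInnerCLM ℝ (x - c, x - c)).comp
        ((ContinuousLinearMap.id ℝ E).prod (ContinuousLinearMap.id ℝ E))) x :=
    hid.inner ℝ hid
  have key := (((hasFDerivAt_const f0 x).add h1).add h2).add ((h3.const_mul (ρ/2)))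
  have heq : (fun V : E => f0 + h V + ⟪P, V - c⟫ + ρ / 2 * ‖V - c‖ ^ 2)
      = (fun V : E => f0 + h V + ⟪P, V - c⟫ + ρ / 2 * ⟪V - c, V - c⟫) := by
    funext V; rw [real_inner_self_eq_norm_sq]
  rw [heq]
  refine key.congr_fderiv ?_
  apply ContinuousLinearMap.ext
  intro w
  simp [inner_add_left, real_inner_smul_left, real_inner_comm (x - c) w,
    InnerProductSpace.toDual_apply_apply, inner_sub_left]
  ring

lemma admm_aux_taylor (h : E → ℝ) (Lh : ℝ) (hLh : 0 ≤ Lh) (hdiff : Differentiable ℝ h)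
    (hlip : ∀ V W : E, ‖gradient h V - gradient h W‖ ≤ Lh * ‖V - W‖) (V W : E) :
    |h W - h V - ⟪gradient h V, W - V⟫| ≤ Lh / 2 * ‖W - V‖ ^ 2 := by
  set Δ := W - V with hΔ
  set g' : ℝ → ℝ := fun t => ⟪gradient h (V + t • Δ), Δ⟫ with hg'
  have hcont : Continuous fun x : E => gradient h x := by
    have : LipschitzWith (Real.toNNReal Lh) (fun x : E => gradient h x) :=
      LipschitzWith.of_dist_le_mul (fun a b => by
        rw [dist_eq_norm, dist_eq_norm, Real.coe_toNNReal Lh hLh]; exact hlip a b)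
    exact this.continuous
  have hgd : ∀ t : ℝ, HasDerivAt (fun s => h (V + s • Δ)) (g' t) t := by
    intro t
    have hc : HasDerivAt (fun s : ℝ => V + s • Δ) Δ t := by
      simpa using ((hasDerivAt_id t).smul_const Δ).const_add V
    have hh : HasFDerivAt h (InnerProductSpace.toDual ℝ E (gradient h (V + t • Δ)))
        (V + t • Δ) := by
      have := (hdiff (V + t • Δ)).hasFDerivAt
      rwa [show InnerProductSpace.toDual ℝ E (gradient h (V + t • Δ)) = fderiv ℝ h (V + t • Δ)
        from (InnerProductSpace.toDual ℝ E).apply_symm_apply _]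
    have := hh.comp_hasDerivAt t hc
    simp [g', InnerProductSpace.toDual_apply_apply] at this ⊢
    exact this
  have hg'cont : Continuous g' := by
    apply Continuous.inner
    · exact hcont.comp (by continuity)
    · exact continuous_const
  have hint := intervalIntegral.integral_eq_sub_of_hasDerivAt
      (f := fun s : ℝ => h (V + s • Δ)) (f' := g') (a := 0) (b := 1)
      (fun t _ => hgd t) (hg'cont.intervalIntegrable 0 1)
  have hWV : h W - h V = ∫ t in (0:ℝ)..1, g' t := by
    rw [hint]; simp [hΔ]
  have hconst : ⟪gradient h V, Δ⟫ = ∫ t in (0:ℝ)..1, g' 0 := by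
    simp [g']
  have hdiffint : h W - h V - ⟪gradient h V, Δ⟫ = ∫ t in (0:ℝ)..1, (g' t - g' 0) := by
    rw [hWV, hconst, intervalIntegral.integral_sub (hg'cont.intervalIntegrable 0 1)
      (intervalIntegrable_const)]
  have hbound : ∀ t ∈ Set.Icc (0:ℝ) 1, ‖g' t - g' 0‖ ≤ Lh * ‖Δ‖ ^ 2 * t := by
    intro t ht
    have : g' t - g' 0 = ⟪gradient h (V + t • Δ) - gradient h (V + (0:ℝ) • Δ), Δ⟫ := by
      simp [g', inner_sub_left]
    rw [this]
    calc ‖(⟪gradient h (V + t • Δ) - gradient h (V + (0:ℝ) • Δ), Δ⟫ : ℝ)‖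
        ≤ ‖gradient h (V + t • Δ) - gradient h (V + (0:ℝ) • Δ)‖ * ‖Δ‖ := by
          exact norm_inner_le_norm _ _
      _ ≤ (Lh * ‖(V + t • Δ) - (V + (0:ℝ) • Δ)‖) * ‖Δ‖ := by
          gcongr; exact hlip _ _
      _ = Lh * ‖Δ‖ ^ 2 * t := by
          have : (V + t • Δ) - (V + (0:ℝ) • Δ) = t • Δ := by module
          rw [this, norm_smul, Real.norm_eq_abs, abs_of_nonneg ht.1]; ring
  have habs : |∫ t in (0:ℝ)..1, (g' t - g' 0)| ≤ Lh / 2 * ‖Δ‖ ^ 2 := by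
    have h1 : |∫ t in (0:ℝ)..1, (g' t - g' 0)| ≤ ∫ t in (0:ℝ)..1, |g' t - g' 0| := by
      simpa [Real.norm_eq_abs] using
        intervalIntegral.norm_integral_le_integral_norm
          (f := fun t => g' t - g' 0) (a := (0:ℝ)) (b := 1) zero_le_one
    have h2 : ∫ t in (0:ℝ)..1, |g' t - g' 0| ≤ ∫ t in (0:ℝ)..1, Lh * ‖Δ‖ ^ 2 * t := by
      apply intervalIntegral.integral_mono_on zero_le_one
      · exact ((hg'cont.sub continuous_const).abs).intervalIntegrable 0 1
      · exact ((continuous_const.mul continuous_id)).intervalIntegrable 0 1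
      · intro t ht
        simpa [Real.norm_eq_abs] using hbound t ht
    have h3 : ∫ t in (0:ℝ)..1, Lh * ‖Δ‖ ^ 2 * t = Lh / 2 * ‖Δ‖ ^ 2 := by
      rw [intervalIntegral.integral_const_mul, integral_id]
      ring
    linarith
  calc |h W - h V - ⟪gradient h V, Δ⟫| = |∫ t in (0:ℝ)..1, (g' t - g' 0)| := by
        rw [hdiffint]
    _ ≤ Lh / 2 * ‖Δ‖ ^ 2 := habs

end aux

lemma admm_aux_lagr_expand {M N : ℕ} (H : Matrix (Fin N) (Fin M) ℝ) (ρ : ℝ)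
    (f : EuclideanSpace ℝ (Fin M) → ℝ) (h : EuclideanSpace ℝ (Fin N) → ℝ)
    (U' : EuclideanSpace ℝ (Fin M)) (Vv W P' : EuclideanSpace ℝ (Fin N)) :
    lagr H ρ f h U' W P' = lagr H ρ f h U' Vv P' + (h W - h Vv)
      + ⟪P' + ρ • (Vv - mvec H U'), W - Vv⟫ + ρ / 2 * ‖W - Vv‖ ^ 2 := by
  simp only [lagr]
  have h1 : W - mvec H U' = (Vv - mvec H U') + (W - Vv) := by abel
  rw [h1, norm_add_sq_real, inner_add_right, inner_add_left, real_inner_smul_left]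
  ring

lemma admm_aux_lagr_P {M N : ℕ} (H : Matrix (Fin N) (Fin M) ℝ) (ρ : ℝ)
    (f : EuclideanSpace ℝ (Fin M) → ℝ) (h : EuclideanSpace ℝ (Fin N) → ℝ)
    (U' : EuclideanSpace ℝ (Fin M)) (Vv P1 P2 : EuclideanSpace ℝ (Fin N)) :
    lagr H ρ f h U' Vv P2 = lagr H ρ f h U' Vv P1 + ⟪P2 - P1, Vv - mvec H U'⟫ := by
  simp only [lagr, inner_sub_left]
  ring

set_option maxHeartbeats 2000000 in
/-- Boundedness of ADMM iterates (part of Lemma 3.2): if `ρ/2 − L_h/ρ − L_h > 0`,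
`f ≥ 0` and `h ≥ 0`, there is `R > 0` with `‖U^k‖, ‖V^k‖, ‖P^k‖ ≤ R` for all `k ≥ 1`. -/
theorem admm_iterates_bounded
    {M N : ℕ} (H : Matrix (Fin N) (Fin M) ℝ) (ρ Lh : ℝ)
    (hρ : 0 < ρ) (hLh : 0 < Lh)
    (f : EuclideanSpace ℝ (Fin M) → ℝ) (h : EuclideanSpace ℝ (Fin N) → ℝ)
    (hdiff : Differentiable ℝ h)
    (hlip : ∀ V W : EuclideanSpace ℝ (Fin N),
      ‖gradient h V - gradient h W‖ ≤ Lh * ‖V - W‖)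
    (U : ℕ → EuclideanSpace ℝ (Fin M)) (V P : ℕ → EuclideanSpace ℝ (Fin N))
    (hUK : ∀ k, U k ∈ Kbox M)
    (hUmin : ∀ k, ∀ U' ∈ Kbox M,
      lagr H ρ f h (U (k+1)) (V k) (P k) ≤ lagr H ρ f h U' (V k) (P k))
    (hVmin : ∀ k, ∀ V' : EuclideanSpace ℝ (Fin N),
      lagr H ρ f h (U (k+1)) (V (k+1)) (P k) ≤ lagr H ρ f h (U (k+1)) V' (P k))
    (hPup : ∀ k, P (k+1) = P k + ρ • (V (k+1) - mvec H (U (k+1))))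
    (hcond : 0 < ρ / 2 - Lh / ρ - Lh)
    (hf : ∀ U' : EuclideanSpace ℝ (Fin M), 0 ≤ f U')
    (hh : ∀ V' : EuclideanSpace ℝ (Fin N), 0 ≤ h V')
    :
    ∃ R : ℝ, 0 < R ∧ ∀ k : ℕ, 1 ≤ k → ‖U k‖ ≤ R ∧ ‖V k‖ ≤ R ∧ ‖P k‖ ≤ R := by
  -- notation
  set G : ℕ → EuclideanSpace ℝ (Fin N) := fun k => gradient h (V k) with hGdef
  set Lg : ℕ → ℝ := fun k => lagr H ρ f h (U k) (V k) (P k) with hLgdef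
  have hρLh : Lh / ρ > 0 := div_pos hLh hρ
  have hhalf : 0 < ρ / 2 - Lh / 2 := by linarith
  -- first order condition for V-update
  have hG : ∀ k, G (k+1) + P k + ρ • (V (k+1) - mvec H (U (k+1))) = 0 := by
    intro k
    have hloc : IsLocalMin (fun V' => lagr H ρ f h (U (k+1)) V' (P k)) (V (k+1)) :=
      Filter.Eventually.of_forall (hVmin k)
    have hfd := admm_aux_hasFDeriv_phi h hdiff (P k) (mvec H (U (k+1))) ρ (f (U (k+1)))
      (V (k+1))
    have hfd' : HasFDerivAt (fun V' => lagr H ρ f h (U (k+1)) V' (P k))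
        (InnerProductSpace.toDual ℝ (EuclideanSpace ℝ (Fin N))
          (G (k+1) + P k + ρ • (V (k+1) - mvec H (U (k+1))))) (V (k+1)) := by
      simpa only [lagr] using hfd
    have hz := hloc.fderiv_eq_zero
    have h0 : InnerProductSpace.toDual ℝ (EuclideanSpace ℝ (Fin N))
        (G (k+1) + P k + ρ • (V (k+1) - mvec H (U (k+1)))) = 0 := by
      rw [← hfd'.fderiv, hz]
    exact (InnerProductSpace.toDual ℝ (EuclideanSpace ℝ (Fin N))).map_eq_zero_iff.mp h0
  -- multiplier identity
  have hPG : ∀ j, P (j+1) = -(gradient h (V (j+1))) := by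
    intro j
    rw [hPup j]
    exact eq_neg_of_add_eq_zero_right (by have := hG j; rwa [add_assoc] at this)
  -- lower bound on the Lagrangian along iterates (k ≥ 1)
  have hA : ∀ j, (ρ/2 - Lh/2) * ‖V (j+1) - mvec H (U (j+1))‖^2 ≤ Lg (j+1) := by
    intro j
    have habs := (abs_le.mp (admm_aux_taylor h Lh hLh.le hdiff hlip (V (j+1))
      (mvec H (U (j+1))))).2
    have hWVd : mvec H (U (j+1)) - V (j+1) = -(V (j+1) - mvec H (U (j+1))) := by abel
    rw [hWVd, inner_neg_right, norm_neg] at habs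
    have hL : Lg (j+1) = f (U (j+1)) + h (V (j+1))
        + ⟪P (j+1), V (j+1) - mvec H (U (j+1))⟫
        + ρ/2 * ‖V (j+1) - mvec H (U (j+1))‖^2 := by
      simp only [hLgdef, lagr]
    have hPk : ⟪P (j+1), V (j+1) - mvec H (U (j+1))⟫
        = -⟪gradient h (V (j+1)), V (j+1) - mvec H (U (j+1))⟫ := by
      rw [hPG j, inner_neg_left]
    rw [hL, hPk]
    have hf' := hf (U (j+1))
    have hh' := hh (mvec H (U (j+1)))
    nlinarith [sq_nonneg ‖V (j+1) - mvec H (U (j+1))‖]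
  -- coefficient inequality
  have hgt : ρ/2 - Lh > 0 := by linarith
  have hco : Lh^2/ρ ≤ ρ/2 - Lh/2 := by
    rw [div_le_iff₀ hρ]
    have h2 := mul_pos hρ hcond
    have h3 : ρ * (ρ / 2 - Lh / ρ - Lh) = ρ * ρ / 2 - Lh - Lh * ρ := by
      field_simp
    rw [h3] at h2
    nlinarith [mul_nonneg hLh.le (show (0:ℝ) ≤ 1 + ρ/2 - Lh by linarith)]
  -- descent of the Lagrangian
  have hdec : ∀ j, Lg (j+1+1) ≤ Lg (j+1) := by
    intro j
    have hρw : ρ • (V (j+1+1) - mvec H (U (j+1+1)))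
        = gradient h (V (j+1)) - gradient h (V (j+1+1)) := by
      have h1 := hG (j+1)
      rw [hPG j] at h1
      rw [eq_sub_iff_add_eq, ← sub_eq_zero]
      rw [show gradient h (V (j+1+1)) + -gradient h (V (j+1))
          + ρ • (V (j+1+1) - mvec H (U (j+1+1)))
          = ρ • (V (j+1+1) - mvec H (U (j+1+1))) + gradient h (V (j+1+1))
            - gradient h (V (j+1)) from by abel] at h1
      exact h1
    have hPdiff : P (j+1+1) - P (j+1) = ρ • (V (j+1+1) - mvec H (U (j+1+1))) := by
      rw [hPup (j+1)]; abel
    have hnorm : ρ * ‖V (j+1+1) - mvec H (U (j+1+1))‖ ≤ Lh * ‖V (j+1) - V (j+1+1)‖ := by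
      calc ρ * ‖V (j+1+1) - mvec H (U (j+1+1))‖
          = ‖ρ • (V (j+1+1) - mvec H (U (j+1+1)))‖ := by
            rw [norm_smul, Real.norm_eq_abs, abs_of_pos hρ]
        _ = ‖gradient h (V (j+1)) - gradient h (V (j+1+1))‖ := by rw [hρw]
        _ ≤ Lh * ‖V (j+1) - V (j+1+1)‖ := hlip _ _
    have hterm : ⟪P (j+1+1) - P (j+1), V (j+1+1) - mvec H (U (j+1+1))⟫
        ≤ Lh^2/ρ * ‖V (j+1) - V (j+1+1)‖^2 := by
      rw [hPdiff, real_inner_smul_left, real_inner_self_eq_norm_sq,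
        div_mul_eq_mul_div, le_div_iff₀ hρ]
      nlinarith [norm_nonneg (V (j+1+1) - mvec H (U (j+1+1))),
        norm_nonneg (V (j+1) - V (j+1+1)), mul_le_mul hnorm hnorm
          (by positivity) (by positivity)]
    have hD1 : Lg (j+1+1) = lagr H ρ f h (U (j+1+1)) (V (j+1+1)) (P (j+1))
        + ⟪P (j+1+1) - P (j+1), V (j+1+1) - mvec H (U (j+1+1))⟫ := by
      simp only [hLgdef]
      exact admm_aux_lagr_P H ρ f h (U (j+1+1)) (V (j+1+1)) (P (j+1)) (P (j+1+1))
    have hPw : P (j+1) + ρ • (V (j+1+1) - mvec H (U (j+1+1)))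
        = -(gradient h (V (j+1+1))) :=
      eq_neg_of_add_eq_zero_right (by have := hG (j+1); rwa [add_assoc] at this)
    have hexp := admm_aux_lagr_expand H ρ f h (U (j+1+1)) (V (j+1+1)) (V (j+1)) (P (j+1))
    rw [hPw, inner_neg_left] at hexp
    have htay := (abs_le.mp (admm_aux_taylor h Lh hLh.le hdiff hlip (V (j+1+1))
      (V (j+1)))).1
    have hD2 : lagr H ρ f h (U (j+1+1)) (V (j+1+1)) (P (j+1))
        + (ρ/2 - Lh/2) * ‖V (j+1) - V (j+1+1)‖^2
        ≤ lagr H ρ f h (U (j+1+1)) (V (j+1)) (P (j+1)) := by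
      nlinarith [hexp, htay]
    have hD3 : lagr H ρ f h (U (j+1+1)) (V (j+1)) (P (j+1)) ≤ Lg (j+1) :=
      hUmin (j+1) (U (j+1)) (hUK (j+1))
    have hfin : Lh^2/ρ * ‖V (j+1) - V (j+1+1)‖^2
        ≤ (ρ/2 - Lh/2) * ‖V (j+1) - V (j+1+1)‖^2 :=
      mul_le_mul_of_nonneg_right hco (sq_nonneg _)
    linarith
  -- Lagrangian bounded by its value at k = 1
  have hmono : ∀ j, Lg (j+1) ≤ Lg 1 := by
    intro j
    induction j with
    | zero => exact le_refl _
    | succ n ih => exact le_trans (hdec n) ih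
  -- bound on the matrix-vector map
  obtain ⟨CH, hCH0, hCH⟩ : ∃ CH : ℝ, 0 ≤ CH ∧
      ∀ U' : EuclideanSpace ℝ (Fin M), ‖mvec H U'‖ ≤ CH * ‖U'‖ := by
    let L : EuclideanSpace ℝ (Fin M) →ₗ[ℝ] EuclideanSpace ℝ (Fin N) :=
      { toFun := mvec H
        map_add' := fun a b => by
          simp only [mvec]
          ext i
          simp [Matrix.mulVec_add]
        map_smul' := fun r a => by
          simp only [mvec]
          ext i
          simp [Matrix.mulVec_smul] }
    exact ⟨‖LinearMap.toContinuousLinearMap L‖, norm_nonneg _,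
      fun U' => (LinearMap.toContinuousLinearMap L).le_opNorm U'⟩
  -- bound on the U iterates
  have hUnorm : ∀ k, ‖U k‖ ≤ Real.sqrt M := by
    intro k
    rw [EuclideanSpace.norm_eq]
    apply Real.sqrt_le_sqrt
    calc ∑ i, ‖U k i‖^2 ≤ ∑ _i : Fin M, 1 := by
          apply Finset.sum_le_sum
          intro i _
          have h1 := (hUK k i).1
          have h2 := (hUK k i).2
          rw [Real.norm_eq_abs, abs_of_nonneg h1]
          nlinarith
      _ = M := by simp
  have hsqrtM : (0:ℝ) ≤ Real.sqrt M := Real.sqrt_nonneg _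
  -- bound on the residual V k - H U k for k ≥ 1
  have hB0 : (0:ℝ) ≤ Real.sqrt (Lg 1 / (ρ/2 - Lh/2)) := Real.sqrt_nonneg _
  have hE : ∀ j, ‖V (j+1) - mvec H (U (j+1))‖ ≤ Real.sqrt (Lg 1 / (ρ/2 - Lh/2)) := by
    intro j
    have h1 := hA j
    have h2 := hmono j
    have h3 : ‖V (j+1) - mvec H (U (j+1))‖^2 ≤ Lg 1 / (ρ/2 - Lh/2) := by
      rw [le_div_iff₀ hhalf]
      nlinarith
    calc ‖V (j+1) - mvec H (U (j+1))‖
        = Real.sqrt (‖V (j+1) - mvec H (U (j+1))‖^2) :=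
          (Real.sqrt_sq (norm_nonneg _)).symm
      _ ≤ Real.sqrt (Lg 1 / (ρ/2 - Lh/2)) := Real.sqrt_le_sqrt h3
  -- bound on V
  have hVb : ∀ j, ‖V (j+1)‖ ≤ Real.sqrt (Lg 1 / (ρ/2 - Lh/2)) + CH * Real.sqrt M := by
    intro j
    calc ‖V (j+1)‖ = ‖(V (j+1) - mvec H (U (j+1))) + mvec H (U (j+1))‖ := by rw [sub_add_cancel]
      _ ≤ ‖V (j+1) - mvec H (U (j+1))‖ + ‖mvec H (U (j+1))‖ := norm_add_le _ _
      _ ≤ Real.sqrt (Lg 1 / (ρ/2 - Lh/2)) + CH * Real.sqrt M := by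
          apply add_le_add (hE j)
          calc ‖mvec H (U (j+1))‖ ≤ CH * ‖U (j+1)‖ := hCH _
            _ ≤ CH * Real.sqrt M := mul_le_mul_of_nonneg_left (hUnorm _) hCH0
  -- bound on P
  have hPb : ∀ j, ‖P (j+1)‖
      ≤ Lh * (Real.sqrt (Lg 1 / (ρ/2 - Lh/2)) + CH * Real.sqrt M) + ‖gradient h 0‖ := by
    intro j
    rw [hPG j, norm_neg]
    calc ‖gradient h (V (j+1))‖
        ≤ ‖gradient h (V (j+1)) - gradient h 0‖ + ‖gradient h 0‖ := by
          simpa using norm_add_le (gradient h (V (j+1)) - gradient h 0) (gradient h 0)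
      _ ≤ Lh * ‖V (j+1) - 0‖ + ‖gradient h 0‖ := by
          have := hlip (V (j+1)) 0
          linarith
      _ ≤ Lh * (Real.sqrt (Lg 1 / (ρ/2 - Lh/2)) + CH * Real.sqrt M) + ‖gradient h 0‖ := by
          rw [sub_zero]
          have := hVb j
          nlinarith [hLh.le]
  -- assemble
  refine ⟨Real.sqrt M + (Real.sqrt (Lg 1 / (ρ/2 - Lh/2)) + CH * Real.sqrt M)
    + (Lh * (Real.sqrt (Lg 1 / (ρ/2 - Lh/2)) + CH * Real.sqrt M) + ‖gradient h 0‖) + 1,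
    ?_, ?_⟩
  · have h1 : (0:ℝ) ≤ CH * Real.sqrt M := mul_nonneg hCH0 hsqrtM
    have h2 : (0:ℝ) ≤ Lh * (Real.sqrt (Lg 1 / (ρ/2 - Lh/2)) + CH * Real.sqrt M) :=
      mul_nonneg hLh.le (by linarith)
    have h3 : (0:ℝ) ≤ ‖gradient h 0‖ := norm_nonneg _
    linarith
  · intro k hk
    obtain ⟨j, rfl⟩ : ∃ j, k = j + 1 := ⟨k - 1, (Nat.succ_pred_eq_of_pos hk).symm⟩
    have h1 : (0:ℝ) ≤ CH * Real.sqrt M := mul_nonneg hCH0 hsqrtM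
    have h2 : (0:ℝ) ≤ Lh * (Real.sqrt (Lg 1 / (ρ/2 - Lh/2)) + CH * Real.sqrt M) :=
      mul_nonneg hLh.le (by linarith)
    have h3 : (0:ℝ) ≤ ‖gradient h 0‖ := norm_nonneg _
    refine ⟨by linarith [hUnorm (j+1)], by linarith [hVb j], by linarith [hPb j]⟩
end

section
/- (Lemma 3.3.) Assume ρ/2 − L_h/ρ − L_h > 0, f(U) ≥ 0 for all U ∈ ℝ^M, and h(V) ≥ 0 for all V ∈ ℝ^N. Then for ADMM iterates (U^k, V^k, P^k) as in the context, the real sequence (L(U^k, V^k, P^k))_{k≥1} converges, and ‖V^{k+1} − V^k‖ → 0 and ‖P^{k+1} − P^k‖ → 0 as k → ∞. -/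
/-!
Stationarity of the `V`-step gives `∇h(V^{k+1}) = -P^{k+1}`, so the dual steps are controlled by
the primal ones: `‖P^{k+1} - P^k‖ ≤ L_h ‖V^{k+1} - V^k‖`. With the descent lemma
`|h y - h x - ⟪∇h x, y - x⟫| ≤ (L_h/2)‖y - x‖²` this makes `L(U^k, V^k, P^k)` decrease by at least
`(ρ/2 - L_h/2 - L_h²/ρ)‖V^{k+1} - V^k‖²` per iteration, and the same identity `P^k = -∇h(V^k)`
together with the descent lemma bounds it below by `f(U^k) + h(HU^k) ≥ 0`. A bounded-below
sequence with such a sufficient decrease converges, and its decrements force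
`‖V^{k+1} - V^k‖ → 0`, hence also `‖P^{k+1} - P^k‖ → 0`.
-/

open scoped RealInnerProductSpace
open Filter

section Descent

variable {F : Type*} [NormedAddCommGroup F] [InnerProductSpace ℝ F] [CompleteSpace F]
  {h : F → ℝ}

lemma hasDerivAt_comp_add_smul (hdiff : Differentiable ℝ h) (x w : F) (t : ℝ) :
    HasDerivAt (fun s : ℝ => h (x + s • w)) ⟪gradient h (x + t • w), w⟫ t := by
  have hh := (hdiff (x + t • w)).hasGradientAt
  rw [hasGradientAt_iff_hasFDerivAt] at hh
  have hline : HasDerivAt (fun s : ℝ => x + s • w) w t := by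
    simpa using ((hasDerivAt_id t).smul_const w).const_add x
  simpa [Function.comp_def] using hh.comp_hasDerivAt t hline

lemma abs_sub_sub_inner_gradient_le (hdiff : Differentiable ℝ h) {L : ℝ}
    (hlip : ∀ y z : F, ‖gradient h y - gradient h z‖ ≤ L * ‖y - z‖) (x y : F) :
    |h y - h x - ⟪gradient h x, y - x⟫| ≤ L / 2 * ‖y - x‖ ^ 2 := by
  set d := y - x
  set g := gradient h x
  set φ : ℝ → ℝ := fun t => h (x + t • d) - h x - t * ⟪g, d⟫
  have hφ : ∀ t, HasDerivAt φ ⟪gradient h (x + t • d) - g, d⟫ t := fun t =>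
    (((hasDerivAt_comp_add_smul hdiff x d t).sub_const (h x)).sub
      ((hasDerivAt_id t).mul_const ⟪g, d⟫)).congr_deriv (by simp [inner_sub_left])
  have hφ' : ∀ t ∈ Set.Ico (0 : ℝ) 1, ‖⟪gradient h (x + t • d) - g, d⟫‖ ≤ L * ‖d‖ ^ 2 * t :=
    fun t ht => calc
      ‖⟪gradient h (x + t • d) - g, d⟫‖ ≤ ‖gradient h (x + t • d) - g‖ * ‖d‖ :=
        norm_inner_le_norm _ _
      _ ≤ L * ‖t • d‖ * ‖d‖ := by
        gcongr
        simpa using hlip (x + t • d) x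
      _ = L * ‖d‖ ^ 2 * t := by
        rw [norm_smul, Real.norm_of_nonneg ht.1]
        ring
  have hbound := image_norm_le_of_norm_deriv_right_le_deriv_boundary
    (B := fun t => L * ‖d‖ ^ 2 * t ^ 2 / 2)
    (fun t _ => (hφ t).continuousAt.continuousWithinAt) (fun t _ => (hφ t).hasDerivWithinAt)
    (by simp [φ])
    (fun t => (((hasDerivAt_pow 2 t).const_mul (L * ‖d‖ ^ 2)).div_const 2).congr_deriv
      (by ring)) hφ' (Set.right_mem_Icc.mpr zero_le_one)
  have hxd : x + d = y := add_sub_cancel x y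
  simpa [φ, hxd, Real.norm_eq_abs] using hbound.trans_eq (by ring)

end Descent

section AugmentedLagrangian

variable {F : Type*} [NormedAddCommGroup F] [InnerProductSpace ℝ F]

/-- `V ↦ L(U, V, P) - f(U)`, written for an arbitrary point `c` in place of `HU`. -/
noncomputable def augLagrV (h : F → ℝ) (ρ : ℝ) (c P V : F) : ℝ :=
  h V + ⟪P, V - c⟫ + ρ / 2 * ‖V - c‖ ^ 2

variable {h : F → ℝ} {ρ L : ℝ} {c P : F}

lemma augLagrV_dual_update (V : F) :
    augLagrV h ρ c (P + ρ • (V - c)) V = augLagrV h ρ c P V + ρ * ‖V - c‖ ^ 2 := by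
  simp only [augLagrV, inner_add_left, real_inner_smul_left, real_inner_self_eq_norm_sq]
  ring

variable [CompleteSpace F]

lemma gradient_eq_of_forall_augLagrV_le {x : F} (hx : DifferentiableAt ℝ h x)
    (hmin : ∀ y, augLagrV h ρ c P x ≤ augLagrV h ρ c P y) :
    gradient h x = -(P + ρ • (x - c)) := by
  set G := gradient h x + (P + ρ • (x - c))
  have hderiv : HasFDerivAt (augLagrV h ρ c P) (InnerProductSpace.toDual ℝ F G) x := by
    have hh := hx.hasGradientAt
    rw [hasGradientAt_iff_hasFDerivAt] at hh
    have hsub := (hasFDerivAt_id (𝕜 := ℝ) x).sub_const c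
    refine ((hh.add ((innerSL ℝ P).hasFDerivAt.comp x hsub)).add
      (hsub.norm_sq.const_mul (ρ / 2))).congr_fderiv ?_
    ext w
    simp [G]
    ring
  have hG : InnerProductSpace.toDual ℝ F G = 0 :=
    IsLocalMin.hasFDerivAt_eq_zero (Eventually.of_forall hmin) hderiv
  rw [← add_eq_zero_iff_eq_neg]
  simpa using hG

lemma augLagrV_le_sub_of_gradient_eq (hdiff : Differentiable ℝ h)
    (hlip : ∀ y z : F, ‖gradient h y - gradient h z‖ ≤ L * ‖y - z‖) {x : F}
    (hgrad : gradient h x = -(P + ρ • (x - c))) (y : F) :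
    augLagrV h ρ c P x ≤ augLagrV h ρ c P y - (ρ - L) / 2 * ‖y - x‖ ^ 2 := by
  have hquad : ⟪P, y - c⟫ + ρ / 2 * ‖y - c‖ ^ 2 = ⟪P, x - c⟫ + ρ / 2 * ‖x - c‖ ^ 2
      + ⟪P + ρ • (x - c), y - x⟫ + ρ / 2 * ‖y - x‖ ^ 2 := by
    rw [show y - c = (x - c) + (y - x) by abel, norm_add_sq_real, inner_add_right,
      inner_add_left, real_inner_smul_left]
    ring
  have hdesc := (abs_le.mp (abs_sub_sub_inner_gradient_le hdiff hlip x y)).1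
  rw [hgrad, inner_neg_left] at hdesc
  simp only [augLagrV]
  linarith

lemma add_mul_sq_le_augLagrV_of_gradient_eq (hdiff : Differentiable ℝ h)
    (hlip : ∀ y z : F, ‖gradient h y - gradient h z‖ ≤ L * ‖y - z‖) {V : F}
    (hgrad : gradient h V = -P) :
    h c + (ρ - L) / 2 * ‖V - c‖ ^ 2 ≤ augLagrV h ρ c P V := by
  have hdesc := (abs_le.mp (abs_sub_sub_inner_gradient_le hdiff hlip V c)).2
  rw [hgrad, inner_neg_left, ← inner_neg_right, neg_sub, norm_sub_rev] at hdesc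
  simp only [augLagrV]
  linarith

end AugmentedLagrangian

lemma exists_tendsto_and_tendsto_zero_of_le_sub_mul_sq {a d : ℕ → ℝ} {b c : ℝ}
    (hb : ∀ k, b ≤ a k) (hc : 0 < c) (hd : ∀ k, 0 ≤ d k)
    (hdec : ∀ k, a (k + 1) ≤ a k - c * d k ^ 2) :
    (∃ l, Tendsto a atTop (nhds l)) ∧ Tendsto d atTop (nhds 0) := by
  have hanti : Antitone a := antitone_nat_of_succ_le fun k => by nlinarith [hdec k]
  have ha := tendsto_atTop_ciInf hanti ⟨b, Set.forall_mem_range.2 hb⟩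
  have hgap : Tendsto (fun k => (a k - a (k + 1)) / c) atTop (nhds 0) := by
    simpa using (ha.sub (ha.comp (tendsto_add_atTop_nat 1))).div_const c
  have hsq : Tendsto (fun k => d k ^ 2) atTop (nhds 0) :=
    squeeze_zero (fun k => sq_nonneg _)
      (fun k => by rw [le_div_iff₀ hc]; linarith [hdec k]) hgap
  refine ⟨⟨_, ha⟩, ?_⟩
  simpa [Real.sqrt_sq (hd _)] using hsq.sqrt

section ADMM

variable {M N : ℕ} {H : Matrix (Fin N) (Fin M) ℝ} {ρ L : ℝ}
  {f : EuclideanSpace ℝ (Fin M) → ℝ} {h : EuclideanSpace ℝ (Fin N) → ℝ}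

lemma lagr_eq_add_augLagrV (U : EuclideanSpace ℝ (Fin M)) (V P : EuclideanSpace ℝ (Fin N)) :
    lagr H ρ f h U V P = f U + augLagrV h ρ (mvec H U) P V := by
  simp only [lagr, augLagrV]
  ring

lemma lagr_admm_step_le (hdiff : Differentiable ℝ h)
    (hlip : ∀ y z, ‖gradient h y - gradient h z‖ ≤ L * ‖y - z‖) (hρ : 0 < ρ)
    {U U' : EuclideanSpace ℝ (Fin M)} {V V' P : EuclideanSpace ℝ (Fin N)}
    (hU : lagr H ρ f h U' V P ≤ lagr H ρ f h U V P)
    (hgrad : gradient h V' = -(P + ρ • (V' - mvec H U')))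
    (hdual : ‖ρ • (V' - mvec H U')‖ ≤ L * ‖V' - V‖) :
    lagr H ρ f h U' V' (P + ρ • (V' - mvec H U'))
      ≤ lagr H ρ f h U V P - (ρ / 2 - L / 2 - L ^ 2 / ρ) * ‖V' - V‖ ^ 2 := by
  have hVstep := augLagrV_le_sub_of_gradient_eq hdiff hlip hgrad V
  have hPstep : ρ * ‖V' - mvec H U'‖ ^ 2 ≤ L ^ 2 / ρ * ‖V' - V‖ ^ 2 := by
    rw [norm_smul, Real.norm_of_nonneg hρ.le] at hdual
    rw [div_mul_eq_mul_div, le_div_iff₀ hρ]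
    nlinarith [pow_le_pow_left₀ (by positivity) hdual 2]
  simp only [lagr_eq_add_augLagrV, augLagrV_dual_update] at hU ⊢
  rw [norm_sub_rev] at hVstep
  linarith

lemma lagr_nonneg_of_gradient_eq (hdiff : Differentiable ℝ h)
    (hlip : ∀ y z, ‖gradient h y - gradient h z‖ ≤ L * ‖y - z‖) (hLρ : L ≤ ρ)
    (hf : ∀ U, 0 ≤ f U) (hh : ∀ V, 0 ≤ h V)
    {U : EuclideanSpace ℝ (Fin M)} {V P : EuclideanSpace ℝ (Fin N)}
    (hgrad : gradient h V = -P) : 0 ≤ lagr H ρ f h U V P := by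
  have hlow := add_mul_sq_le_augLagrV_of_gradient_eq (c := mvec H U) (ρ := ρ) hdiff hlip hgrad
  rw [lagr_eq_add_augLagrV]
  nlinarith [hf U, hh (mvec H U), sq_nonneg ‖V - mvec H U‖]

end ADMM

/-- Lemma 3.3: the Lagrangian values converge and successive differences of `V` and
`P` tend to zero. -/
theorem admm_lagrangian_convergence
    {M N : ℕ} (H : Matrix (Fin N) (Fin M) ℝ) (ρ Lh : ℝ)
    (hρ : 0 < ρ) (hLh : 0 < Lh)
    (f : EuclideanSpace ℝ (Fin M) → ℝ) (h : EuclideanSpace ℝ (Fin N) → ℝ)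
    (hdiff : Differentiable ℝ h)
    (hlip : ∀ V W : EuclideanSpace ℝ (Fin N),
      ‖gradient h V - gradient h W‖ ≤ Lh * ‖V - W‖)
    (U : ℕ → EuclideanSpace ℝ (Fin M)) (V P : ℕ → EuclideanSpace ℝ (Fin N))
    (hUK : ∀ k, U k ∈ Kbox M)
    (hUmin : ∀ k, ∀ U' ∈ Kbox M,
      lagr H ρ f h (U (k+1)) (V k) (P k) ≤ lagr H ρ f h U' (V k) (P k))
    (hVmin : ∀ k, ∀ V' : EuclideanSpace ℝ (Fin N),
      lagr H ρ f h (U (k+1)) (V (k+1)) (P k) ≤ lagr H ρ f h (U (k+1)) V' (P k))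
    (hPup : ∀ k, P (k+1) = P k + ρ • (V (k+1) - mvec H (U (k+1))))
    (hcond : 0 < ρ / 2 - Lh / ρ - Lh)
    (hf : ∀ U' : EuclideanSpace ℝ (Fin M), 0 ≤ f U')
    (hh : ∀ V' : EuclideanSpace ℝ (Fin N), 0 ≤ h V')
    :
    (∃ l : ℝ, Tendsto (fun k => lagr H ρ f h (U k) (V k) (P k)) atTop (nhds l)) ∧
      Tendsto (fun k => ‖V (k+1) - V k‖) atTop (nhds 0) ∧
        Tendsto (fun k => ‖P (k+1) - P k‖) atTop (nhds 0) := by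
  have hgrad : ∀ k, gradient h (V (k + 1)) = -P (k + 1) := fun k => by
    rw [hPup k]
    refine gradient_eq_of_forall_augLagrV_le (hdiff _) fun V' => ?_
    simpa [lagr_eq_add_augLagrV] using hVmin k V'
  have hdual : ∀ k, ‖P (k + 2) - P (k + 1)‖ ≤ Lh * ‖V (k + 2) - V (k + 1)‖ := fun k => by
    have hgrad' : gradient h (V (k + 2)) = -P (k + 2) := hgrad (k + 1)
    rw [norm_sub_rev, ← neg_sub_neg, ← hgrad k, ← hgrad']
    exact hlip _ _
  have hdesc : ∀ k, lagr H ρ f h (U (k + 2)) (V (k + 2)) (P (k + 2)) ≤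
      lagr H ρ f h (U (k + 1)) (V (k + 1)) (P (k + 1))
        - (ρ / 2 - Lh / 2 - Lh ^ 2 / ρ) * ‖V (k + 2) - V (k + 1)‖ ^ 2 := fun k => by
    have hPk : P (k + 2) = P (k + 1) + ρ • (V (k + 2) - mvec H (U (k + 2))) := hPup (k + 1)
    rw [hPk]
    refine lagr_admm_step_le hdiff hlip hρ (hUmin (k + 1) _ (hUK (k + 1))) ?_ ?_
    · rw [← hPk]; exact hgrad (k + 1)
    · rw [eq_sub_of_add_eq' hPk.symm]; exact hdual k
  have hLρ : 2 * Lh < ρ := by linarith [div_pos hLh hρ]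
  have hc : 0 < ρ / 2 - Lh / 2 - Lh ^ 2 / ρ := by
    have : Lh ^ 2 / ρ < Lh / 2 := by
      rw [div_lt_div_iff₀ hρ two_pos]
      nlinarith
    linarith [div_pos hLh hρ]
  obtain ⟨⟨l, hl⟩, hV⟩ := exists_tendsto_and_tendsto_zero_of_le_sub_mul_sq
    (a := fun k => lagr H ρ f h (U (k + 1)) (V (k + 1)) (P (k + 1)))
    (d := fun k => ‖V (k + 2) - V (k + 1)‖)
    (fun k => lagr_nonneg_of_gradient_eq hdiff hlip (by linarith) hf hh (hgrad k))
    hc (fun k => norm_nonneg _) hdesc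
  refine ⟨⟨l, (tendsto_add_atTop_iff_nat 1).1 hl⟩, (tendsto_add_atTop_iff_nat 1).1 hV,
    (tendsto_add_atTop_iff_nat 1).1 ?_⟩
  exact squeeze_zero (fun k => norm_nonneg _) hdual (by simpa using hV.const_mul Lh)
end

section
/- (Lemma 3.5, continuity of the Lagrangian value at limit points.) Assume ρ/2 − L_h/ρ − L_h > 0, f ≥ 0 and h ≥ 0, and additionally that f is lower semicontinuous. Let (U^{k_s}, V^{k_s}, P^{k_s}) (with k_s strictly increasing, k_s ≥ 1) be a subsequence of ADMM iterates converging to a point (U*, V*, P*). Then lim_{s→∞} L(U^{k_s}, V^{k_s}, P^{k_s}) = L(U*, V*, P*). -/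
open scoped RealInnerProductSpace
open Filter

/-! ### Auxiliary material -/

/-- `mvec H` as a continuous linear map. -/
noncomputable def mvecCLM {M N : ℕ} (H : Matrix (Fin N) (Fin M) ℝ) :
    EuclideanSpace ℝ (Fin M) →L[ℝ] EuclideanSpace ℝ (Fin N) :=
  ((PiLp.continuousLinearEquiv 2 ℝ (fun _ : Fin N => ℝ)).symm.toContinuousLinearMap.comp
    (LinearMap.toContinuousLinearMap H.mulVecLin)).comp
    (PiLp.continuousLinearEquiv 2 ℝ (fun _ : Fin M => ℝ)).toContinuousLinearMap

lemma mvec_eq {M N : ℕ} (H : Matrix (Fin N) (Fin M) ℝ) (U : EuclideanSpace ℝ (Fin M)) :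
    mvec H U = mvecCLM H U := rfl

section aux
variable {N : ℕ}
local notation "F" => EuclideanSpace ℝ (Fin N)

/-- Descent lemma: quadratic upper bound for a function with Lipschitz gradient. -/
lemma descent_upper (Lh : ℝ) (h : F → ℝ) (hdiff : Differentiable ℝ h)
    (hlip : ∀ V W : F, ‖gradient h V - gradient h W‖ ≤ Lh * ‖V - W‖) (x y : F) :
    h y ≤ h x + ⟪gradient h x, y - x⟫ + Lh / 2 * ‖y - x‖ ^ 2 := by
  set d := y - x with hd
  have hline : ∀ t : ℝ, HasDerivAt (fun t : ℝ => x + t • d) d t := by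
    intro t
    simpa using ((hasDerivAt_id t).smul_const d).const_add x
  have hg : ∀ t : ℝ, HasDerivAt (fun t : ℝ => h (x + t • d))
      ⟪gradient h (x + t • d), d⟫ t := by
    intro t
    have := ((hdiff (x + t • d)).hasGradientAt.hasFDerivAt).comp_hasDerivAt t (hline t)
    simpa [InnerProductSpace.toDual_apply_apply, Function.comp_def] using this
  set φ : ℝ → ℝ := fun t => h (x + t • d) - t * ⟪gradient h x, d⟫ - (Lh / 2 * ‖d‖ ^ 2) * t ^ 2
    with hφ
  have hφ' : ∀ t : ℝ, HasDerivAt φ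
      (⟪gradient h (x + t • d), d⟫ - ⟪gradient h x, d⟫ - (Lh / 2 * ‖d‖ ^ 2) * (2 * t)) t := by
    intro t
    exact ((hg t).sub ((hasDerivAt_mul_const _).congr_deriv rfl)).sub
      (((hasDerivAt_pow 2 t).const_mul (Lh / 2 * ‖d‖ ^ 2)).congr_deriv (by ring))
  have hanti : AntitoneOn φ (Set.Icc (0:ℝ) 1) := by
    apply antitoneOn_of_deriv_nonpos (convex_Icc 0 1)
    · exact fun t _ => ((hφ' t).continuousAt).continuousWithinAt
    · exact fun t ht => ((hφ' t).differentiableAt).differentiableWithinAt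
    · intro t ht
      rw [interior_Icc] at ht
      rw [(hφ' t).deriv]
      have h1 : ⟪gradient h (x + t • d), d⟫ - ⟪gradient h x, d⟫
          ≤ Lh * t * ‖d‖ ^ 2 := by
        rw [← inner_sub_left]
        calc ⟪gradient h (x + t • d) - gradient h x, d⟫
            ≤ ‖gradient h (x + t • d) - gradient h x‖ * ‖d‖ := real_inner_le_norm _ _
          _ ≤ (Lh * ‖(x + t • d) - x‖) * ‖d‖ := by
              apply mul_le_mul_of_nonneg_right _ (norm_nonneg _)
              exact hlip _ _
          _ = Lh * t * ‖d‖ ^ 2 := by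
              simp [norm_smul, abs_of_nonneg ht.1.le]
              ring
      nlinarith [sq_nonneg ‖d‖]
  have h01 := hanti (Set.left_mem_Icc.2 zero_le_one) (Set.right_mem_Icc.2 zero_le_one)
    zero_le_one
  have h0 : φ 0 = h x := by simp [hφ]
  have h1 : φ 1 = h y - ⟪gradient h x, d⟫ - Lh / 2 * ‖d‖ ^ 2 := by
    simp [hφ, hd]
  rw [h0, h1] at h01
  linarith

/-- Descent lemma: quadratic lower bound for a function with Lipschitz gradient. -/
lemma descent_lower (Lh : ℝ) (h : F → ℝ) (hdiff : Differentiable ℝ h)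
    (hlip : ∀ V W : F, ‖gradient h V - gradient h W‖ ≤ Lh * ‖V - W‖) (x y : F) :
    h x + ⟪gradient h x, y - x⟫ - Lh / 2 * ‖y - x‖ ^ 2 ≤ h y := by
  have hgneg : ∀ z : F, gradient (fun w => -h w) z = -gradient h z := by
    intro z
    simp [gradient, fderiv_neg]
  have := descent_upper Lh (fun w => -h w) hdiff.neg
    (fun Vv Ww => by
      simp only [hgneg]
      calc ‖-gradient h Vv - -gradient h Ww‖ = ‖gradient h Vv - gradient h Ww‖ := by
            rw [← norm_neg]; congr 1; abel
        _ ≤ Lh * ‖Vv - Ww‖ := hlip _ _) x y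
  simp only [inner_neg_left, hgneg] at this
  linarith

/-- Fréchet derivative of the `V`-subproblem objective. -/
lemma hasFDerivAt_psi (a : ℝ) (h : F → ℝ) (hdiff : Differentiable ℝ h)
    (P c : F) (ρ : ℝ) (V : F) :
    HasFDerivAt (fun W : F => a + h W + ⟪P, W - c⟫ + ρ / 2 * ‖W - c‖ ^ 2)
      (InnerProductSpace.toDual ℝ F (gradient h V + (P + ρ • (V - c)))) V := by
  have hfun : (fun W : F => a + h W + ⟪P, W - c⟫ + ρ / 2 * ‖W - c‖ ^ 2)
      = fun W : F => a + h W + ⟪P, W - c⟫ + ρ / 2 * ⟪W - c, W - c⟫ := by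
    funext W; rw [real_inner_self_eq_norm_sq]
  rw [hfun]
  have hid : HasFDerivAt (fun W : F => W - c) (ContinuousLinearMap.id ℝ F) V :=
    (hasFDerivAt_id V).sub_const c
  have hsq := (hid.inner ℝ hid).const_mul (ρ / 2)
  have hP : HasFDerivAt (fun W : F => ⟪P, W - c⟫) (innerSL ℝ P) V := by
    have := ((innerSL ℝ P).hasFDerivAt (x := V)).sub_const ⟪P, c⟫
    apply this.congr_of_eventuallyEq
    filter_upwards with W
    simp [inner_sub_right]
  have hh : HasFDerivAt (fun W : F => a + h W)
      (InnerProductSpace.toDual ℝ F (gradient h V)) V :=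
    ((hdiff V).hasGradientAt.hasFDerivAt).const_add a
  have := (hh.add hP).add hsq
  apply this.congr_fderiv
  ext w
  simp [fderivInnerCLM_apply, InnerProductSpace.toDual_apply_apply, inner_add_left,
    real_inner_smul_left, real_inner_comm, sub_mul, Finset.sum_sub_distrib, mul_comm]
  have hxx : ∀ x : Fin N, w x * (V x - c x) = V x * w x - c x * w x := fun x => by ring
  simp only [hxx, Finset.sum_sub_distrib, mul_sub]
  rw [inner_sub_right, real_inner_comm V w, real_inner_comm c w]
  ring

end aux

set_option maxHeartbeats 2000000 in
/-- Lemma 3.5: along any convergent subsequence of ADMM iterates, the Lagrangian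
values converge to the Lagrangian value at the limit point. -/
theorem admm_lagrangian_continuity_at_limit
    {M N : ℕ} (H : Matrix (Fin N) (Fin M) ℝ) (ρ Lh : ℝ)
    (hρ : 0 < ρ) (hLh : 0 < Lh)
    (f : EuclideanSpace ℝ (Fin M) → ℝ) (h : EuclideanSpace ℝ (Fin N) → ℝ)
    (hdiff : Differentiable ℝ h)
    (hlip : ∀ V W : EuclideanSpace ℝ (Fin N),
      ‖gradient h V - gradient h W‖ ≤ Lh * ‖V - W‖)
    (U : ℕ → EuclideanSpace ℝ (Fin M)) (V P : ℕ → EuclideanSpace ℝ (Fin N))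
    (hUK : ∀ k, U k ∈ Kbox M)
    (hUmin : ∀ k, ∀ U' ∈ Kbox M,
      lagr H ρ f h (U (k+1)) (V k) (P k) ≤ lagr H ρ f h U' (V k) (P k))
    (hVmin : ∀ k, ∀ V' : EuclideanSpace ℝ (Fin N),
      lagr H ρ f h (U (k+1)) (V (k+1)) (P k) ≤ lagr H ρ f h (U (k+1)) V' (P k))
    (hPup : ∀ k, P (k+1) = P k + ρ • (V (k+1) - mvec H (U (k+1))))
    (hcond : 0 < ρ / 2 - Lh / ρ - Lh)
    (hf : ∀ U' : EuclideanSpace ℝ (Fin M), 0 ≤ f U')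
    (hh : ∀ V' : EuclideanSpace ℝ (Fin N), 0 ≤ h V')
    (hlsc : LowerSemicontinuous f)
    (ks : ℕ → ℕ) (hks : StrictMono ks) (hks1 : 1 ≤ ks 0)
    (Ustar : EuclideanSpace ℝ (Fin M)) (Vstar Pstar : EuclideanSpace ℝ (Fin N))
    (hUconv : Tendsto (fun s => U (ks s)) atTop (nhds Ustar))
    (hVconv : Tendsto (fun s => V (ks s)) atTop (nhds Vstar))
    (hPconv : Tendsto (fun s => P (ks s)) atTop (nhds Pstar))
    :
    Tendsto (fun s => lagr H ρ f h (U (ks s)) (V (ks s)) (P (ks s))) atTop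
      (nhds (lagr H ρ f h Ustar Vstar Pstar)) := by
  -- shorthand
  set A := mvecCLM H with hA
  -- first-order optimality of the V-step
  have Vopt : ∀ k, gradient h (V (k+1)) + (P k + ρ • (V (k+1) - mvec H (U (k+1)))) = 0 := by
    intro k
    have hmin : IsLocalMin (fun W => f (U (k+1)) + h W + ⟪P k, W - mvec H (U (k+1))⟫
        + ρ / 2 * ‖W - mvec H (U (k+1))‖ ^ 2) (V (k+1)) := by
      apply Filter.Eventually.of_forall
      intro W
      have := hVmin k W
      simpa [lagr] using this
    have hfd := hasFDerivAt_psi (f (U (k+1))) h hdiff (P k) (mvec H (U (k+1))) ρ (V (k+1))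
    have h0 := hmin.hasFDerivAt_eq_zero hfd
    apply (InnerProductSpace.toDual ℝ (EuclideanSpace ℝ (Fin N))).injective
    rw [h0]; simp
  have Popt : ∀ k, P (k+1) = - gradient h (V (k+1)) := by
    intro k
    have h1 := hPup k
    have h2 := Vopt k
    rw [h1]
    have : P k + ρ • (V (k+1) - mvec H (U (k+1))) =
        gradient h (V (k+1)) + (P k + ρ • (V (k+1) - mvec H (U (k+1)))) - gradient h (V (k+1)) := by
      abel
    rw [this, h2]
    abel
  -- Ustar lies in the box
  have hKstar : Ustar ∈ Kbox M := by
    intro i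
    have hcont : Continuous fun x : EuclideanSpace ℝ (Fin M) => x i :=
      (continuous_apply i).comp (PiLp.continuousLinearEquiv 2 ℝ (fun _ : Fin M => ℝ)).continuous
    have hci : Tendsto (fun s => U (ks s) i) atTop (nhds (Ustar i)) :=
      (hcont.tendsto _).comp hUconv
    constructor
    · exact ge_of_tendsto hci (Eventually.of_forall fun s => (hUK (ks s) i).1)
    · exact le_of_tendsto hci (Eventually.of_forall fun s => (hUK (ks s) i).2)
  have hdiv : ρ * (Lh / ρ) = Lh := by field_simp
  have hρ2Lh : 2 * Lh < ρ := by nlinarith [mul_pos hρ hcond, hdiv]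
  -- gain in the V-step
  have Vgain : ∀ k, lagr H ρ f h (U (k+1)) (V (k+1)) (P k)
      + (ρ - Lh) / 2 * ‖V (k+1) - V k‖ ^ 2 ≤ lagr H ρ f h (U (k+1)) (V k) (P k) := by
    intro k
    set c := mvec H (U (k+1)) with hc
    have hlow := descent_lower Lh h hdiff hlip (V (k+1)) (V k)
    have hrev : ‖V (k+1) - V k‖ = ‖V k - V (k+1)‖ := norm_sub_rev _ _
    have hWc : V k - c = (V (k+1) - c) + (V k - V (k+1)) := by abel
    have hsq : ‖V k - c‖ ^ 2 = ‖V (k+1) - c‖ ^ 2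
        + 2 * ⟪V (k+1) - c, V k - V (k+1)⟫ + ‖V k - V (k+1)‖ ^ 2 := by
      rw [hWc, norm_add_sq_real]
    have hsq2 : ρ / 2 * ‖V k - c‖ ^ 2 = ρ / 2 * ‖V (k+1) - c‖ ^ 2
        + ρ * ⟪V (k+1) - c, V k - V (k+1)⟫ + ρ / 2 * ‖V k - V (k+1)‖ ^ 2 := by
      rw [hsq]; ring
    have hopt : ⟪gradient h (V (k+1)), V k - V (k+1)⟫ + ⟪P k, V k - V (k+1)⟫
        + ρ * ⟪V (k+1) - c, V k - V (k+1)⟫ = 0 := by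
      have h0 : ⟪gradient h (V (k+1)) + (P k + ρ • (V (k+1) - c)), V k - V (k+1)⟫ = (0:ℝ) := by
        rw [Vopt k]; simp
      rw [inner_add_left, inner_add_left, real_inner_smul_left] at h0
      linarith
    have hPin : ⟪P k, V k - c⟫ = ⟪P k, V (k+1) - c⟫ + ⟪P k, V k - V (k+1)⟫ := by
      rw [hWc, inner_add_right]
    simp only [lagr, ← hc]
    rw [hrev]
    linarith
  -- effect of the P-step
  have Pstep : ∀ k, lagr H ρ f h (U (k+1)) (V (k+1)) (P (k+1))
      = lagr H ρ f h (U (k+1)) (V (k+1)) (P k)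
        + ρ * ‖V (k+1) - mvec H (U (k+1))‖ ^ 2 := by
    intro k
    simp only [lagr]
    rw [hPup k, inner_add_left, real_inner_smul_left, real_inner_self_eq_norm_sq]
    ring
  -- dual residual bound
  have hres : ∀ j, ρ * ‖V (j+2) - mvec H (U (j+2))‖ ^ 2
      ≤ Lh ^ 2 / ρ * ‖V (j+2) - V (j+1)‖ ^ 2 := by
    intro j
    have e : ρ • (V (j+2) - mvec H (U (j+2)))
        = gradient h (V (j+1)) - gradient h (V (j+2)) := by
      have h1 := hPup (j+1)
      have h2 : P (j+2) = - gradient h (V (j+2)) := Popt (j+1)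
      have h3 : P (j+1) = - gradient h (V (j+1)) := Popt j
      have : ρ • (V (j+2) - mvec H (U (j+2))) = P (j+2) - P (j+1) := by
        rw [h1]; abel
      rw [this, h2, h3]; abel
    have e2 : ρ * ‖V (j+2) - mvec H (U (j+2))‖
        = ‖gradient h (V (j+1)) - gradient h (V (j+2))‖ := by
      rw [← e, norm_smul, Real.norm_eq_abs, abs_of_pos hρ]
    have e3 : ‖gradient h (V (j+1)) - gradient h (V (j+2))‖
        ≤ Lh * ‖V (j+2) - V (j+1)‖ := by
      rw [show ‖V (j+2) - V (j+1)‖ = ‖V (j+1) - V (j+2)‖ from norm_sub_rev _ _]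
      exact hlip _ _
    have e4 : ρ * ‖V (j+2) - mvec H (U (j+2))‖ ≤ Lh * ‖V (j+2) - V (j+1)‖ := by
      rw [e2]; exact e3
    have hn1 : (0:ℝ) ≤ ‖V (j+2) - mvec H (U (j+2))‖ := norm_nonneg _
    have hn2 : (0:ℝ) ≤ ‖V (j+2) - V (j+1)‖ := norm_nonneg _
    have e5 : (ρ * ‖V (j+2) - mvec H (U (j+2))‖) ^ 2 ≤ (Lh * ‖V (j+2) - V (j+1)‖) ^ 2 :=
      pow_le_pow_left₀ (by positivity) e4 2
    calc ρ * ‖V (j+2) - mvec H (U (j+2))‖ ^ 2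
        = (ρ * ‖V (j+2) - mvec H (U (j+2))‖) ^ 2 / ρ := by field_simp
      _ ≤ (Lh * ‖V (j+2) - V (j+1)‖) ^ 2 / ρ := by
          gcongr
      _ = Lh ^ 2 / ρ * ‖V (j+2) - V (j+1)‖ ^ 2 := by ring
  -- monotonicity of the Lagrangian values from iterate 1 onwards
  have Lmono : ∀ j, lagr H ρ f h (U (j+2)) (V (j+2)) (P (j+2))
      ≤ lagr H ρ f h (U (j+1)) (V (j+1)) (P (j+1)) := by
    intro j
    have h1 := Pstep (j+1)
    have h2 := Vgain (j+1)
    have h3 := hUmin (j+1) (U (j+1)) (hUK (j+1))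
    have h4 := hres j
    have hcoef : Lh ^ 2 / ρ ≤ (ρ - Lh) / 2 := by
      rw [div_le_div_iff₀ hρ (by norm_num : (0:ℝ) < 2)]
      have h6 : Lh * (2 * Lh) ≤ Lh * ρ := mul_le_mul_of_nonneg_left hρ2Lh.le hLh.le
      have h7 : Lh * ρ ≤ (ρ - Lh) * ρ := mul_le_mul_of_nonneg_right (by linarith) hρ.le
      nlinarith
    have h5 : Lh ^ 2 / ρ * ‖V (j+2) - V (j+1)‖ ^ 2
        ≤ (ρ - Lh) / 2 * ‖V (j+2) - V (j+1)‖ ^ 2 :=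
      mul_le_mul_of_nonneg_right hcoef (sq_nonneg _)
    linarith
  set B := lagr H ρ f h (U 1) (V 1) (P 1) with hB
  have LleB : ∀ j, lagr H ρ f h (U (j+1)) (V (j+1)) (P (j+1)) ≤ B := by
    intro j
    induction j with
    | zero => exact le_rfl
    | succ n ih => exact (Lmono n).trans ih
  -- lower bound for the Lagrangian
  have Llb : ∀ j, (ρ - Lh) / 2 * ‖V (j+1) - mvec H (U (j+1))‖ ^ 2
      ≤ lagr H ρ f h (U (j+1)) (V (j+1)) (P (j+1)) := by
    intro j
    set c := mvec H (U (j+1)) with hc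
    have hup := descent_upper Lh h hdiff hlip (V (j+1)) c
    have hPj : P (j+1) = - gradient h (V (j+1)) := Popt j
    have hni : ⟪gradient h (V (j+1)), c - V (j+1)⟫
        = - ⟪gradient h (V (j+1)), V (j+1) - c⟫ := by
      rw [show c - V (j+1) = -(V (j+1) - c) from by abel, inner_neg_right]
    have hnn : ‖c - V (j+1)‖ = ‖V (j+1) - c‖ := norm_sub_rev _ _
    have hhc : (0:ℝ) ≤ h c := hh c
    have hfU : (0:ℝ) ≤ f (U (j+1)) := hf _
    simp only [lagr, ← hc, hPj, inner_neg_left]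
    rw [hni, hnn] at hup
    linarith
  have hρLh : 0 < ρ - Lh := by linarith
  set Rr := Real.sqrt (2 * B / (ρ - Lh)) with hRr
  have hrb : ∀ j, ‖V (j+1) - mvec H (U (j+1))‖ ≤ Rr := by
    intro j
    have h1 : (ρ - Lh) / 2 * ‖V (j+1) - mvec H (U (j+1))‖ ^ 2 ≤ B := (Llb j).trans (LleB j)
    have h2 : ‖V (j+1) - mvec H (U (j+1))‖ ^ 2 ≤ 2 * B / (ρ - Lh) := by
      rw [le_div_iff₀ hρLh]
      linarith
    calc ‖V (j+1) - mvec H (U (j+1))‖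
        = Real.sqrt (‖V (j+1) - mvec H (U (j+1))‖ ^ 2) := (Real.sqrt_sq (norm_nonneg _)).symm
      _ ≤ Rr := Real.sqrt_le_sqrt h2
  set CA := ‖A‖ * Real.sqrt M with hCAdef
  have hCA : ∀ U' ∈ Kbox M, ‖mvec H U'‖ ≤ CA := by
    intro U' hU'
    have hnU : ‖U'‖ ≤ Real.sqrt M := by
      rw [EuclideanSpace.norm_eq]
      apply Real.sqrt_le_sqrt
      calc ∑ i, ‖U' i‖ ^ 2 ≤ ∑ _i : Fin M, (1:ℝ) := by
            apply Finset.sum_le_sum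
            intro i _
            have h2 : ‖U' i‖ ≤ 1 := by
              rw [Real.norm_eq_abs, abs_le]
              exact ⟨by linarith [(hU' i).1], (hU' i).2⟩
            calc ‖U' i‖ ^ 2 ≤ 1 ^ 2 := by
                  apply pow_le_pow_left₀ (norm_nonneg _) h2
              _ = 1 := one_pow 2
        _ = (M : ℝ) := by simp
    rw [mvec_eq, ← hA]
    calc ‖A U'‖ ≤ ‖A‖ * ‖U'‖ := A.le_opNorm U'
      _ ≤ CA := mul_le_mul_of_nonneg_left hnU (norm_nonneg _)
  have hCA0 : 0 ≤ CA := by positivity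
  set CV := Rr + CA with hCVdef
  have hCV : ∀ j, ‖V (j+1)‖ ≤ CV := by
    intro j
    have he : V (j+1) = (V (j+1) - mvec H (U (j+1))) + mvec H (U (j+1)) := by abel
    calc ‖V (j+1)‖ = ‖(V (j+1) - mvec H (U (j+1))) + mvec H (U (j+1))‖ := by rw [← he]
      _ ≤ ‖V (j+1) - mvec H (U (j+1))‖ + ‖mvec H (U (j+1))‖ := norm_add_le _ _
      _ ≤ Rr + CA := add_le_add (hrb j) (hCA _ (hUK _))
  have hCV0 : 0 ≤ CV := le_trans (norm_nonneg _) (hCV 0)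
  set CP := ‖gradient h 0‖ + Lh * CV with hCPdef
  have hCP : ∀ j, ‖P (j+1)‖ ≤ CP := by
    intro j
    rw [Popt j, norm_neg]
    have he : gradient h (V (j+1)) = (gradient h (V (j+1)) - gradient h 0) + gradient h 0 := by
      abel
    calc ‖gradient h (V (j+1))‖
        = ‖(gradient h (V (j+1)) - gradient h 0) + gradient h 0‖ := by rw [← he]
      _ ≤ ‖gradient h (V (j+1)) - gradient h 0‖ + ‖gradient h 0‖ := norm_add_le _ _
      _ ≤ Lh * ‖V (j+1) - 0‖ + ‖gradient h 0‖ := add_le_add (hlip _ _) le_rfl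
      _ = Lh * ‖V (j+1)‖ + ‖gradient h 0‖ := by rw [sub_zero]
      _ ≤ Lh * CV + ‖gradient h 0‖ :=
          add_le_add (mul_le_mul_of_nonneg_left (hCV j) hLh.le) le_rfl
      _ = CP := by rw [hCPdef]; ring
  have hCP0 : 0 ≤ CP := le_trans (norm_nonneg _) (hCP 0)
  set C := CP + ρ / 2 * (2 * CV + 2 * CA) with hCdef
  -- the key upper bound on f along the subsequence
  have hfb : ∀ s, 1 ≤ s → f (U (ks s))
      ≤ f Ustar + C * ‖mvec H (U (ks s)) - mvec H Ustar‖ := by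
    intro s hs
    have hks2 : 2 ≤ ks s := by
      have h1 : ks 0 < ks 1 := hks (by norm_num)
      have h2 : ks 1 ≤ ks s := hks.monotone hs
      omega
    obtain ⟨j, hj⟩ : ∃ j, ks s = j + 2 := ⟨ks s - 2, by omega⟩
    have hm := hUmin (j+1) Ustar hKstar
    simp only [lagr] at hm
    have hPd : ⟪P (j+1), V (j+1) - mvec H Ustar⟫ - ⟪P (j+1), V (j+1) - mvec H (U (j+2))⟫
        ≤ CP * ‖mvec H (U (j+2)) - mvec H Ustar‖ := by
      rw [← inner_sub_right]
      have hab : (V (j+1) - mvec H Ustar) - (V (j+1) - mvec H (U (j+2)))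
          = mvec H (U (j+2)) - mvec H Ustar := by abel
      rw [hab]
      exact (real_inner_le_norm _ _).trans
        (mul_le_mul_of_nonneg_right (hCP j) (norm_nonneg _))
    have hna : ‖V (j+1) - mvec H Ustar‖ ≤ CV + CA :=
      (norm_sub_le _ _).trans (add_le_add (hCV j) (hCA Ustar hKstar))
    have hnb : ‖V (j+1) - mvec H (U (j+2))‖ ≤ CV + CA :=
      (norm_sub_le _ _).trans (add_le_add (hCV j) (hCA _ (hUK _)))
    have hq : ‖V (j+1) - mvec H Ustar‖ ^ 2 - ‖V (j+1) - mvec H (U (j+2))‖ ^ 2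
        ≤ (2 * CV + 2 * CA) * ‖mvec H (U (j+2)) - mvec H Ustar‖ := by
      set a := V (j+1) - mvec H Ustar with ha
      set b := V (j+1) - mvec H (U (j+2)) with hb
      have hkey : ‖a‖ ^ 2 - ‖b‖ ^ 2 = ⟪a - b, a + b⟫ := by
        rw [inner_sub_left, inner_add_right, inner_add_right,
          real_inner_self_eq_norm_sq, real_inner_self_eq_norm_sq, real_inner_comm b a]
        ring
      have hab : a - b = mvec H (U (j+2)) - mvec H Ustar := by rw [ha, hb]; abel
      rw [hkey, hab]
      calc ⟪mvec H (U (j+2)) - mvec H Ustar, a + b⟫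
          ≤ ‖mvec H (U (j+2)) - mvec H Ustar‖ * ‖a + b‖ := real_inner_le_norm _ _
        _ ≤ ‖mvec H (U (j+2)) - mvec H Ustar‖ * (‖a‖ + ‖b‖) :=
            mul_le_mul_of_nonneg_left (norm_add_le _ _) (norm_nonneg _)
        _ ≤ ‖mvec H (U (j+2)) - mvec H Ustar‖ * (2 * CV + 2 * CA) :=
            mul_le_mul_of_nonneg_left (by linarith) (norm_nonneg _)
        _ = (2 * CV + 2 * CA) * ‖mvec H (U (j+2)) - mvec H Ustar‖ := mul_comm _ _
    have hq2 : ρ / 2 * (‖V (j+1) - mvec H Ustar‖ ^ 2 - ‖V (j+1) - mvec H (U (j+2))‖ ^ 2)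
        ≤ ρ / 2 * ((2 * CV + 2 * CA) * ‖mvec H (U (j+2)) - mvec H Ustar‖) :=
      mul_le_mul_of_nonneg_left hq (by positivity)
    have e12 : j + 1 + 1 = j + 2 := rfl
    rw [e12] at hm
    rw [hj]
    have hfin1 : f (U (j+2)) ≤ f Ustar
        + (⟪P (j+1), V (j+1) - mvec H Ustar⟫ - ⟪P (j+1), V (j+1) - mvec H (U (j+2))⟫)
        + ρ / 2 * (‖V (j+1) - mvec H Ustar‖ ^ 2 - ‖V (j+1) - mvec H (U (j+2))‖ ^ 2) := by
      linarith [hm]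
    have hfin2 : f (U (j+2)) ≤ f Ustar + CP * ‖mvec H (U (j+2)) - mvec H Ustar‖
        + ρ / 2 * ((2 * CV + 2 * CA) * ‖mvec H (U (j+2)) - mvec H Ustar‖) := by
      exact le_trans hfin1 (add_le_add (add_le_add le_rfl hPd) hq2)
    calc f (U (j+2)) ≤ f Ustar + CP * ‖mvec H (U (j+2)) - mvec H Ustar‖
        + ρ / 2 * ((2 * CV + 2 * CA) * ‖mvec H (U (j+2)) - mvec H Ustar‖) := hfin2
      _ = f Ustar + C * ‖mvec H (U (j+2)) - mvec H Ustar‖ := by rw [hCdef]; ring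
  -- convergence of the residual term
  have hAc : Tendsto (fun s => mvec H (U (ks s))) atTop (nhds (mvec H Ustar)) := by
    simp only [mvec_eq, ← hA]
    exact (A.continuous.tendsto Ustar).comp hUconv
  have hdten : Tendsto (fun s => ‖mvec H (U (ks s)) - mvec H Ustar‖) atTop (nhds 0) := by
    have := (hAc.sub (tendsto_const_nhds (x := mvec H Ustar))).norm
    simpa using this
  have htail : Tendsto (fun s => f Ustar + C * ‖mvec H (U (ks s)) - mvec H Ustar‖)
      atTop (nhds (f Ustar)) := by
    have := tendsto_const_nhds (x := f Ustar) (f := atTop (α := ℕ)) |>.add (hdten.const_mul C)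
    simpa using this
  have hften : Tendsto (fun s => f (U (ks s))) atTop (nhds (f Ustar)) := by
    rw [tendsto_order]
    constructor
    · intro a ha
      exact hUconv.eventually (hlsc Ustar a ha)
    · intro a ha
      have h1 : ∀ᶠ s in atTop, f Ustar + C * ‖mvec H (U (ks s)) - mvec H Ustar‖ < a :=
        htail.eventually_lt_const ha
      have h2 : ∀ᶠ s : ℕ in atTop, 1 ≤ s := eventually_ge_atTop 1
      filter_upwards [h1, h2] with s hs1 hs2
      exact lt_of_le_of_lt (hfb s hs2) hs1
  -- put everything together
  have hrten : Tendsto (fun s => V (ks s) - mvec H (U (ks s))) atTop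
      (nhds (Vstar - mvec H Ustar)) := hVconv.sub hAc
  have hinner : Tendsto (fun s => ⟪P (ks s), V (ks s) - mvec H (U (ks s))⟫) atTop
      (nhds ⟪Pstar, Vstar - mvec H Ustar⟫) := hPconv.inner hrten
  have hnrm : Tendsto (fun s => ρ / 2 * ‖V (ks s) - mvec H (U (ks s))‖ ^ 2) atTop
      (nhds (ρ / 2 * ‖Vstar - mvec H Ustar‖ ^ 2)) := ((hrten.norm).pow 2).const_mul (ρ / 2)
  have hhten : Tendsto (fun s => h (V (ks s))) atTop (nhds (h Vstar)) :=
    (hdiff.continuous.tendsto _).comp hVconv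
  simp only [lagr]
  exact ((hften.add hhten).add hinner).add hnrm
end

section
/- (Lipschitz gradient of the smoothed misfit.) Let a > 0, tr ∈ ℝ, N ∈ ℕ, and I ∈ ℝ^N with 0 ≤ I_i ≤ 1 for all i. Define h_a : ℝ^N → ℝ by h_a(V) = Σ_i (Sig_a(V_i²) − I_i)², where Sig_a(x) = 1/(1 + exp(−a(x − tr))). Then h_a is differentiable on ℝ^N and there exists a constant L_h > 0 such that ‖∇h_a(V) − ∇h_a(W)‖ ≤ L_h ‖V − W‖ for all V, W ∈ ℝ^N, i.e. ∇h_a is globally Lipschitz continuous. -/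
/-- The smoothed misfit `h_a(V) = Σᵢ (Sig_a(Vᵢ²) − Iᵢ)²`. -/
noncomputable def misfit (a tr : ℝ) {N : ℕ} (I : Fin N → ℝ)
    (V : EuclideanSpace ℝ (Fin N)) : ℝ :=
  ∑ i, (Sig a tr (V i ^ 2) - I i) ^ 2

/-!
The misfit is a sum of one-variable terms `φ_c (V i)` with `φ_c t = (Sig a tr (t ^ 2) - c) ^ 2`,
so its gradient acts coordinatewise by `φ_c'`, and it suffices that `φ_c'` be Lipschitz uniformly
in `c ∈ [0, 1]`. Since `Sig' = a Sig (1 - Sig)`, with `s = Sig a tr (t ^ 2)` the second derivative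
`φ_c''` is a polynomial in `s`, `c` and `a t ^ 2 s (1 - s)`. All of these are bounded, the last one
because `1 - Sig a tr x ≤ exp (-a (x - tr))` decays faster than `x` grows; the mean value theorem
then gives the Lipschitz bound.
-/

open Real NNReal

theorem EuclideanSpace.hasGradientAt_sum_apply {ι : Type*} [Fintype ι] {f f' : ι → ℝ → ℝ}
    {V : EuclideanSpace ℝ ι} (hf : ∀ i, HasDerivAt (f i) (f' i (V i)) (V i)) :
    HasGradientAt (fun V : EuclideanSpace ℝ ι => ∑ i, f i (V i))
      (WithLp.toLp 2 fun i => f' i (V i)) V := by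
  rw [hasGradientAt_iff_hasFDerivAt]
  have hproj (i : ι) :
      HasFDerivAt (fun V : EuclideanSpace ℝ ι => V i) (EuclideanSpace.proj i (𝕜 := ℝ)) V :=
    (EuclideanSpace.proj i : EuclideanSpace ℝ ι →L[ℝ] ℝ).hasFDerivAt
  refine (HasFDerivAt.fun_sum fun i _ => (hf i).comp_hasFDerivAt V (hproj i)).congr_fderiv ?_
  ext W
  simp [PiLp.inner_apply, mul_comm]

theorem EuclideanSpace.lipschitzWith_toLp_apply {ι : Type*} [Fintype ι] {K : ℝ≥0}
    {f : ι → ℝ → ℝ} (hf : ∀ i, LipschitzWith K (f i)) :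
    LipschitzWith K fun V : EuclideanSpace ℝ ι => WithLp.toLp 2 fun i => f i (V i) := by
  refine LipschitzWith.of_dist_le_mul fun V W => ?_
  refine (pow_le_pow_iff_left₀ dist_nonneg (by positivity) two_ne_zero).1 ?_
  rw [mul_pow, EuclideanSpace.dist_sq_eq, EuclideanSpace.dist_sq_eq, Finset.mul_sum]
  gcongr with i
  rw [← mul_pow]
  exact pow_le_pow_left₀ dist_nonneg ((hf i).dist_le_mul _ _) 2

theorem Sig_pos (a tr x : ℝ) : 0 < Sig a tr x := by
  unfold Sig; positivity

theorem one_sub_Sig_eq (a tr x : ℝ) :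
    1 - Sig a tr x = exp (-a * (x - tr)) / (1 + exp (-a * (x - tr))) := by
  unfold Sig; field_simp; ring

theorem one_sub_Sig_pos (a tr x : ℝ) : 0 < 1 - Sig a tr x := by
  rw [one_sub_Sig_eq]; positivity

theorem Sig_lt_one (a tr x : ℝ) : Sig a tr x < 1 := by
  linarith [one_sub_Sig_pos a tr x]

theorem Sig_mul_one_sub_le (a tr x : ℝ) : Sig a tr x * (1 - Sig a tr x) ≤ 1 / 4 := by
  nlinarith [sq_nonneg (Sig a tr x - 1 / 2)]

theorem one_sub_Sig_le (a tr x : ℝ) : 1 - Sig a tr x ≤ exp (-a * (x - tr)) := by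
  rw [one_sub_Sig_eq]
  exact div_le_self (exp_pos _).le (by linarith [exp_pos (-a * (x - tr))])

theorem hasDerivAt_Sig (a tr x : ℝ) :
    HasDerivAt (Sig a tr) (a * Sig a tr x * (1 - Sig a tr x)) x := by
  have hE : HasDerivAt (fun x => exp (-a * (x - tr))) (exp (-a * (x - tr)) * -a) x := by
    simpa using (((hasDerivAt_id x).sub_const tr).const_mul (-a)).exp
  have hden : 1 + exp (-a * (x - tr)) ≠ 0 := by positivity
  have hSig : Sig a tr = fun x => (1 + exp (-a * (x - tr)))⁻¹ := by
    funext y; rw [Sig, one_div]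
  refine hSig ▸ ((hE.const_add 1).inv hden).congr_deriv ?_
  beta_reduce
  field_simp
  ring

theorem mul_one_sub_Sig_le {a x : ℝ} (tr : ℝ) (hax : 0 ≤ a * x) :
    a * x * (1 - Sig a tr x) ≤ exp (a * tr - 1) := by
  calc a * x * (1 - Sig a tr x) ≤ a * x * exp (-a * (x - tr)) :=
        mul_le_mul_of_nonneg_left (one_sub_Sig_le a tr x) hax
    _ = a * x * exp (-(a * x)) * exp (a * tr) := by rw [mul_assoc _ (exp _), ← exp_add]; ring_nf
    _ ≤ exp (-1) * exp (a * tr) := by gcongr; exact mul_exp_neg_le_exp_neg_one _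
    _ = exp (a * tr - 1) := by rw [← exp_add]; ring_nf

section MisfitTerm

variable (a tr c : ℝ)

noncomputable def misfitTermDeriv (t : ℝ) : ℝ :=
  4 * a * t * (Sig a tr (t ^ 2) - c) * Sig a tr (t ^ 2) * (1 - Sig a tr (t ^ 2))

theorem hasDerivAt_Sig_sq (t : ℝ) :
    HasDerivAt (fun t => Sig a tr (t ^ 2))
      (2 * t * (a * Sig a tr (t ^ 2) * (1 - Sig a tr (t ^ 2)))) t := by
  refine ((hasDerivAt_Sig a tr (t ^ 2)).comp t (hasDerivAt_pow 2 t)).congr_deriv ?_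
  push_cast
  ring

theorem hasDerivAt_misfitTerm (t : ℝ) :
    HasDerivAt (fun t => (Sig a tr (t ^ 2) - c) ^ 2) (misfitTermDeriv a tr c t) t := by
  refine (((hasDerivAt_Sig_sq a tr t).sub_const c).pow 2).congr_deriv ?_
  simp only [misfitTermDeriv]
  ring

theorem hasDerivAt_misfitTermDeriv (t : ℝ) :
    HasDerivAt (misfitTermDeriv a tr c)
      (let s := Sig a tr (t ^ 2); let p := s * (1 - s)
       4 * a * p * (s - c) + 8 * a * (a * t ^ 2 * p) * (p + (s - c) * (1 - 2 * s))) t := by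
  have hs := hasDerivAt_Sig_sq a tr t
  have hpoly := ((((hasDerivAt_id' t).const_mul (4 * a)).fun_mul (hs.sub_const c)).fun_mul
    hs).fun_mul (hs.const_sub 1)
  refine hpoly.congr_deriv ?_
  ring

theorem abs_deriv_misfitTermDeriv_le (ha : 0 ≤ a) (hc₀ : 0 ≤ c) (hc₁ : c ≤ 1) (t : ℝ) :
    |deriv (misfitTermDeriv a tr c) t| ≤ a + 10 * a * exp (a * tr - 1) := by
  rw [(hasDerivAt_misfitTermDeriv a tr c t).deriv]
  extract_lets s p
  have hs₀ : 0 < s := Sig_pos a tr _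
  have hs₁ : s < 1 := Sig_lt_one a tr _
  have hp₀ : 0 ≤ p := mul_nonneg hs₀.le (by linarith)
  have hp : p ≤ 1 / 4 := Sig_mul_one_sub_le a tr _
  have hsc : |s - c| ≤ 1 := abs_le.2 ⟨by linarith, by linarith⟩
  have h2s : |1 - 2 * s| ≤ 1 := abs_le.2 ⟨by linarith, by linarith⟩
  have hu₀ : 0 ≤ a * t ^ 2 * p := by positivity
  have hu : a * t ^ 2 * p ≤ exp (a * tr - 1) :=
    calc a * t ^ 2 * p ≤ a * t ^ 2 * (1 - s) :=
          mul_le_mul_of_nonneg_left (mul_le_of_le_one_left (by linarith) hs₁.le) (by positivity)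
      _ ≤ exp (a * tr - 1) := mul_one_sub_Sig_le tr (by positivity)
  have hq : |p + (s - c) * (1 - 2 * s)| ≤ 5 / 4 :=
    calc |p + (s - c) * (1 - 2 * s)| ≤ |p| + |s - c| * |1 - 2 * s| := by
          rw [← abs_mul]; exact abs_add_le _ _
      _ ≤ 1 / 4 + 1 * 1 := by
          rw [abs_of_nonneg hp₀]; gcongr
      _ = 5 / 4 := by norm_num
  calc _ ≤ |4 * a * p * (s - c)| + |8 * a * (a * t ^ 2 * p) * (p + (s - c) * (1 - 2 * s))| :=
        abs_add_le _ _
    _ = 4 * a * p * |s - c| + 8 * a * (a * t ^ 2 * p) * |p + (s - c) * (1 - 2 * s)| := by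
        rw [abs_mul, abs_mul (8 * a * _), abs_of_nonneg (by positivity : 0 ≤ 4 * a * p),
          abs_of_nonneg (by positivity : 0 ≤ 8 * a * (a * t ^ 2 * p))]
    _ ≤ 4 * a * (1 / 4) * 1 + 8 * a * exp (a * tr - 1) * (5 / 4) := by gcongr
    _ = a + 10 * a * exp (a * tr - 1) := by ring

theorem lipschitzWith_misfitTermDeriv (ha : 0 ≤ a) (hc₀ : 0 ≤ c) (hc₁ : c ≤ 1) :
    LipschitzWith (a + 10 * a * exp (a * tr - 1)).toNNReal (misfitTermDeriv a tr c) := by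
  refine lipschitzWith_of_nnnorm_deriv_le
    (fun t => (hasDerivAt_misfitTermDeriv a tr c t).differentiableAt) fun t => ?_
  rw [← NNReal.coe_le_coe, coe_nnnorm, Real.coe_toNNReal _ (by positivity), Real.norm_eq_abs]
  exact abs_deriv_misfitTermDeriv_le a tr c ha hc₀ hc₁ t

end MisfitTerm

/-- Lipschitz gradient of the smoothed misfit: `h_a` is differentiable and its
gradient is globally Lipschitz continuous. -/
theorem misfit_gradient_lipschitz (a tr : ℝ) (ha : 0 < a) (N : ℕ)
    (I : Fin N → ℝ) (hI : ∀ i, 0 ≤ I i ∧ I i ≤ 1) :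
    Differentiable ℝ (misfit a tr I) ∧
      ∃ Lh : ℝ, 0 < Lh ∧ ∀ V W : EuclideanSpace ℝ (Fin N),
        ‖gradient (misfit a tr I) V - gradient (misfit a tr I) W‖ ≤
          Lh * ‖V - W‖ := by
  have hgrad (V : EuclideanSpace ℝ (Fin N)) :
      HasGradientAt (misfit a tr I) (WithLp.toLp 2 fun i => misfitTermDeriv a tr (I i) (V i)) V :=
    EuclideanSpace.hasGradientAt_sum_apply fun i => hasDerivAt_misfitTerm a tr (I i) (V i)
  have hlip := EuclideanSpace.lipschitzWith_toLp_apply fun i =>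
    lipschitzWith_misfitTermDeriv a tr (I i) ha.le (hI i).1 (hI i).2
  refine ⟨fun V => (hgrad V).differentiableAt, a + 10 * a * exp (a * tr - 1), by positivity,
    fun V W => ?_⟩
  rw [(hgrad V).gradient, (hgrad W).gradient, ← dist_eq_norm, ← dist_eq_norm]
  simpa [Real.coe_toNNReal _ (by positivity : 0 ≤ a + 10 * a * exp (a * tr - 1))]
    using hlip.dist_le_mul V W
end
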